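/- arXiv:math/0605727 — 8 statements merged into one kernel-verified Lean document; each statement's English description precedes it below -/
import Mathlib

section
/- With α_r(k,j) defined as the number of pairs ((c_1,...,c_r),(d_0,...,d_r)) of integer tuples satisfying 0 ≤ c_1 ≤ ⋯ ≤ c_r, Σ c_i = k, -j ≤ d_0 ≤ 0, d_0 ≤ d_1 ≤ ⋯ ≤ d_r, and d_i ≤ c_i for 1 ≤ i ≤ r, one has for r ≥ 1 and j ≥ 1 the recursion α_r(k,j) = α_r(k,j-1) + Σ_{m=0}^{⌊k/r⌋} α_{r-1}(k - m r, m + j). -/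
/-- `alpha r k j` counts pairs `((c_1,…,c_r),(d_0,d_1,…,d_r))` with
`0 ≤ c_1 ≤ ⋯ ≤ c_r`, `∑ c_i = k`, `-j ≤ d_0 ≤ 0`, `d_0 ≤ d_1 ≤ ⋯ ≤ d_r`,
and `d_i ≤ c_i` for `1 ≤ i ≤ r`. -/
noncomputable def alpha (r k j : ℕ) : ℕ :=
  Nat.card {p : (Fin r → ℕ) × (Fin (r + 1) → ℤ) //
    Monotone p.1 ∧ (∑ i, p.1 i) = k ∧
    -(j : ℤ) ≤ p.2 0 ∧ p.2 0 ≤ 0 ∧ Monotone p.2 ∧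
    ∀ i : Fin r, p.2 i.succ ≤ (p.1 i : ℤ)}


abbrev A (r k j : ℕ) : Type :=
  {p : (Fin r → ℕ) × (Fin (r + 1) → ℤ) //
    Monotone p.1 ∧ (∑ i, p.1 i) = k ∧
    -(j : ℤ) ≤ p.2 0 ∧ p.2 0 ≤ 0 ∧ Monotone p.2 ∧
    ∀ i : Fin r, p.2 i.succ ≤ (p.1 i : ℤ)}

instance finiteA (r k j : ℕ) : Finite (A r k j) := by
  have hS : {f : Fin r → ℕ | ∀ i, f i ∈ Set.Iic k}.Finite := by
    have := Set.Finite.pi (fun i : Fin r => Set.finite_Iic k)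
    refine this.subset ?_
    intro f hf; simp only [Set.mem_pi, Set.mem_univ, forall_true_left]
    exact fun i => hf i
  have hT : {g : Fin (r+1) → ℤ | ∀ i, g i ∈ Set.Icc (-(j:ℤ)) k}.Finite := by
    have := Set.Finite.pi (fun i : Fin (r+1) => Set.finite_Icc (-(j:ℤ)) (k:ℤ))
    refine this.subset ?_
    intro f hf; simp only [Set.mem_pi, Set.mem_univ, forall_true_left]
    exact fun i => hf i
  have h : {p : (Fin r → ℕ) × (Fin (r + 1) → ℤ) |
      Monotone p.1 ∧ (∑ i, p.1 i) = k ∧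
      -(j : ℤ) ≤ p.2 0 ∧ p.2 0 ≤ 0 ∧ Monotone p.2 ∧
      ∀ i : Fin r, p.2 i.succ ≤ (p.1 i : ℤ)}.Finite := by
    refine (hS.prod hT).subset ?_
    rintro ⟨c, d⟩ ⟨h1, h2, h3, h4, h5, h6⟩
    constructor
    · intro i
      simp only [Set.mem_Iic]
      calc c i ≤ ∑ i, c i := Finset.single_le_sum (fun i _ => Nat.zero_le _) (Finset.mem_univ i)
      _ = k := h2
    · intro i
      have hck : ∀ i, c i ≤ k := fun i =>
        h2 ▸ Finset.single_le_sum (fun i _ => Nat.zero_le _) (Finset.mem_univ i)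
      constructor
      · exact h3.trans (h5 (Fin.zero_le i))
      · induction i using Fin.cases with
        | zero => exact h4.trans (by positivity)
        | succ i' => exact (h6 i').trans (by exact_mod_cast hck i')
  exact h

lemma monotone_cons {n : ℕ} {α : Type*} [Preorder α] {x : α} {f : Fin n → α}
    (hf : Monotone f) (hx : ∀ i, x ≤ f i) : Monotone (Fin.cons x f) := by
  intro a b hab
  induction a using Fin.cases with
  | zero =>
    induction b using Fin.cases with
    | zero => exact le_rfl
    | succ j => simpa using hx j
  | succ i =>
    induction b using Fin.cases with
    | zero => exact absurd (Fin.le_zero_iff.mp hab) (Fin.succ_ne_zero i)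
    | succ j => simpa using hf (Fin.succ_le_succ_iff.mp hab)
def fwd (s k t : ℕ) (p : A (s+1) k (t+1)) :
    A (s+1) k t ⊕ Σ m : Fin (k/(s+1)+1), A s (k - m*(s+1)) (m+(t+1)) :=
  if h : -(t:ℤ) ≤ p.val.2 0 then
    Sum.inl ⟨p.val, p.prop.1, p.prop.2.1, h, p.prop.2.2.2⟩
  else
    Sum.inr ⟨⟨p.val.1 0, by
      -- p.val.1 0 < k/(s+1)+1
      obtain ⟨hmono, hsum, h3, h4, h5, h6⟩ := p.prop
      have hle : ∀ i, p.val.1 0 ≤ p.val.1 i := fun i => hmono (Fin.zero_le i)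
      have : (s+1) * p.val.1 0 ≤ k := by
        calc (s+1) * p.val.1 0 = ∑ _i : Fin (s+1), p.val.1 0 := by
              simp [Finset.sum_const, mul_comm]
          _ ≤ ∑ i, p.val.1 i := Finset.sum_le_sum (fun i _ => hle i)
          _ = k := hsum
      exact Nat.lt_succ_of_le ((Nat.le_div_iff_mul_le (Nat.succ_pos s)).mpr
        (by rw [mul_comm]; exact this))⟩,
      ⟨(fun i => p.val.1 i.succ - p.val.1 0, fun i => p.val.2 i.succ - p.val.1 0), by
      obtain ⟨⟨c, d⟩, hmono, hsum, h3, h4, h5, h6⟩ := p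
      dsimp only at *
      have hle : ∀ i, c 0 ≤ c i := fun i => hmono (Fin.zero_le i)
      have hd0 : d 0 = -((t:ℤ)+1) := by
        have := h3; push_cast at this ⊢; omega
      refine ⟨?_, ?_, ?_, ?_, ?_, ?_⟩
      · intro a b hab
        exact Nat.sub_le_sub_right (hmono (Fin.succ_le_succ_iff.mpr hab)) _
      · have hk : k = c 0 + ∑ i : Fin s, c i.succ := by
          rw [← hsum, Fin.sum_univ_succ]
        have : ∀ i : Fin s, c i.succ - c 0 + c 0 = c i.succ :=
          fun i => Nat.sub_add_cancel (hle i.succ)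
        have hsum2 : ∑ i : Fin s, (c i.succ - c 0) + s * c 0 = ∑ i : Fin s, c i.succ := by
          calc ∑ i : Fin s, (c i.succ - c 0) + s * c 0
              = ∑ i : Fin s, ((c i.succ - c 0) + c 0) := by
                rw [Finset.sum_add_distrib]; simp [mul_comm]
            _ = ∑ i : Fin s, c i.succ := by simp [this]
        have hms : c 0 * (s+1) = s * c 0 + c 0 := by ring
        rw [hms]
        omega
      · have h10 : d 0 ≤ d (0:Fin (s+1)).succ := h5 (Fin.zero_le _)
        push_cast
        omega
      · have := h6 0
        simp only [Fin.succ_zero_eq_one] at this ⊢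
        omega
      · intro a b hab
        simpa using h5 (Fin.succ_le_succ_iff.mpr hab)
      · intro i
        have : d i.succ.succ ≤ (c i.succ : ℤ) := h6 i.succ
        have hc : ((c i.succ - c 0 : ℕ) : ℤ) = (c i.succ : ℤ) - c 0 := by
          exact_mod_cast Nat.cast_sub (hle i.succ)
        rw [hc]
        omega⟩⟩
def bwd (s k t : ℕ) (q : A (s+1) k t ⊕ Σ m : Fin (k/(s+1)+1), A s (k - m*(s+1)) (m+(t+1))) :
    A (s+1) k (t+1) :=
  match q with
  | Sum.inl p => ⟨p.val, p.prop.1, p.prop.2.1, by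
      have := p.prop.2.2.1; push_cast at this ⊢; omega, p.prop.2.2.2⟩
  | Sum.inr ⟨m, q⟩ => ⟨(Fin.cons (m:ℕ) (fun i => q.val.1 i + m),
      Fin.cons (-((t:ℤ)+1)) (fun i => q.val.2 i + m)), by
      obtain ⟨mv, hm⟩ := m
      obtain ⟨⟨c, d⟩, hmono, hsum, h3, h4, h5, h6⟩ := q
      dsimp only at *
      have hcmono : Monotone c := hmono
      have hdmono : Monotone d := h5
      have hs : ∑ i, c i = k - mv*(s+1) := hsum
      have h3' : -(((mv:ℤ)) + ((t:ℤ)+1)) ≤ d 0 := by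
        have : -(((mv + (t+1) : ℕ)) : ℤ) ≤ d 0 := h3
        push_cast at this; omega
      have h4' : d 0 ≤ 0 := h4
      have h6' : ∀ i : Fin s, d i.succ ≤ (c i : ℤ) := h6
      have hmk : mv * (s+1) ≤ k :=
        (Nat.le_div_iff_mul_le (Nat.succ_pos s)).mp (Nat.lt_succ_iff.mp hm)
      have hd0 : ∀ i, -((t:ℤ)+1) ≤ d i + mv := by
        intro i
        have h1 : d 0 ≤ d i := hdmono (Fin.zero_le i)
        omega
      refine ⟨?_, ?_, ?_, ?_, ?_, ?_⟩
      · exact monotone_cons (fun a b hab => Nat.add_le_add_right (hcmono hab) mv)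
          (fun i => Nat.le_add_left _ _)
      · rw [Fin.sum_cons, Finset.sum_add_distrib]
        simp only [Finset.sum_const, Finset.card_univ, Fintype.card_fin, smul_eq_mul]
        have hms : mv * (s+1) = s * mv + mv := by ring
        omega
      · rw [Fin.cons_zero]
        push_cast
        omega
      · rw [Fin.cons_zero]
        omega
      · exact monotone_cons (fun a b hab => by
          have := hdmono hab; omega) hd0
      · intro i
        rw [Fin.cons_succ]
        induction i using Fin.cases with
        | zero =>
          rw [Fin.cons_zero]
          omega
        | succ i' =>
          rw [Fin.cons_succ]
          have := h6' i'
          push_cast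
          omega⟩

lemma bwd_fwd (s k t : ℕ) : Function.LeftInverse (bwd s k t) (fwd s k t) := by
  intro p
  by_cases h : -(t:ℤ) ≤ p.val.2 0
  · rw [fwd, dif_pos h]
    exact Subtype.ext rfl
  · rw [fwd, dif_neg h]
    rw [bwd]
    apply Subtype.ext
    obtain ⟨⟨c, d⟩, hmono, hsum, h3, h4, h5, h6⟩ := p
    dsimp only at *
    refine Prod.ext ?_ ?_
    · funext i
      induction i using Fin.cases with
      | zero => simp
      | succ i' =>
        simp only [Fin.cons_succ]
        exact Nat.sub_add_cancel (hmono (Fin.zero_le i'.succ))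
    · funext i
      induction i using Fin.cases with
      | zero =>
        simp only [Fin.cons_zero]
        have h3' : -(((t:ℤ))+1) ≤ d 0 := by
          have h3'' : -(((t+1:ℕ)):ℤ) ≤ d 0 := h3
          push_cast at h3''; omega
        have h4' : d 0 ≤ 0 := h4
        have h' : ¬ -(t:ℤ) ≤ d 0 := h
        omega
      | succ i' =>
        simp only [Fin.cons_succ]
        ring

lemma fwd_bwd (s k t : ℕ) : Function.RightInverse (bwd s k t) (fwd s k t) := by
  rintro (p | ⟨⟨mv, hm⟩, q⟩)
  · have h : -(t:ℤ) ≤ (bwd s k t (Sum.inl p)).val.2 0 := p.prop.2.2.1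
    rw [fwd, dif_pos h]
    rfl
  · have h : ¬ -(t:ℤ) ≤ (bwd s k t (Sum.inr ⟨⟨mv, hm⟩, q⟩)).val.2 0 := by
      show ¬ -(t:ℤ) ≤ -((t:ℤ)+1)
      omega
    rw [fwd, dif_neg h]
    refine congrArg Sum.inr ?_
    have key : ∀ (x : A s (k - mv*(s+1)) (mv+(t+1))), x.val = q.val →
        (⟨⟨mv, hm⟩, x⟩ : Σ m : Fin (k/(s+1)+1), A s (k - m*(s+1)) (m+(t+1))) = ⟨⟨mv, hm⟩, q⟩ :=
      fun x hx => congrArg _ (Subtype.ext hx)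
    refine key _ ?_
    refine Prod.ext (funext fun i => ?_) (funext fun i => ?_)
    · exact Nat.add_sub_cancel _ _
    · exact add_sub_cancel_right _ _

noncomputable def keyEquiv (s k t : ℕ) :
    A (s+1) k (t+1) ≃ (A (s+1) k t ⊕ Σ m : Fin (k/(s+1)+1), A s (k - m*(s+1)) (m+(t+1))) :=
  ⟨fwd s k t, bwd s k t, bwd_fwd s k t, fwd_bwd s k t⟩

lemma nat_card_sigma {N : ℕ} (f : Fin N → Type*) [∀ i, Finite (f i)] :
    Nat.card ((i : Fin N) × f i) = ∑ i, Nat.card (f i) := by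
  have : ∀ i, Fintype (f i) := fun i => Fintype.ofFinite (f i)
  simp only [Nat.card_eq_fintype_card]
  exact Fintype.card_sigma

lemma key (s k t : ℕ) :
    alpha (s+1) k (t+1) = alpha (s+1) k t +
      ∑ m ∈ Finset.range (k/(s+1)+1), alpha s (k - m*(s+1)) (m+(t+1)) := by
  calc alpha (s+1) k (t+1)
      = Nat.card (A (s+1) k t ⊕ Σ m : Fin (k/(s+1)+1), A s (k - m*(s+1)) (m+(t+1))) :=
        Nat.card_congr (keyEquiv s k t)
    _ = Nat.card (A (s+1) k t) +
        Nat.card (Σ m : Fin (k/(s+1)+1), A s (k - m*(s+1)) (m+(t+1))) := Nat.card_sum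
    _ = Nat.card (A (s+1) k t) +
        ∑ m : Fin (k/(s+1)+1), Nat.card (A s (k - m*(s+1)) (m+(t+1))) := by
          rw [nat_card_sigma]
    _ = alpha (s+1) k t + ∑ m ∈ Finset.range (k/(s+1)+1), alpha s (k - m*(s+1)) (m+(t+1)) := by
          congr 1
          exact Fin.sum_univ_eq_sum_range (fun m => alpha s (k - m*(s+1)) (m+(t+1))) _

theorem stmt2 (r k j : ℕ) (hr : 1 ≤ r) (hj : 1 ≤ j) :
    alpha r k j =
      alpha r k (j - 1) +
        ∑ m ∈ Finset.range (k / r + 1), alpha (r - 1) (k - m * r) (m + j) := by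
  obtain ⟨s, rfl⟩ : ∃ s, r = s + 1 := ⟨r - 1, (Nat.succ_pred_eq_of_pos hr).symm⟩
  obtain ⟨t, rfl⟩ : ∃ t, j = t + 1 := ⟨j - 1, (Nat.succ_pred_eq_of_pos hj).symm⟩
  exact key s k t
end

section
/- With F_r(x,y) defined by F_0(x,y) = 1/(1−y)² and F_r(x,y) = (F_{r−1}(x,x^r)x^r − F_{r−1}(x,y)y)/((x^r − y)(1 − y)), one has the functional equation F_r(x,y) = x^{−r(r+1)/2} y^{−2} F_r(1/x, 1/y) as an identity of rational functions, for every r ≥ 0. -/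
noncomputable def F {K : Type*} [Field K] : ℕ → K → K → K
  | 0, _, y => 1 / (1 - y) ^ 2
  | r + 1, x, y =>
      (F r x (x ^ (r + 1)) * x ^ (r + 1) - F r x y * y) / ((x ^ (r + 1) - y) * (1 - y))

lemma key_s7 {K : Type*} [Field K] (r : ℕ) (x : K) (hx : x ≠ 0)
    (hx1 : ∀ k : ℕ, 0 < k → x ^ k ≠ 1) :
    ∀ y : K, y ≠ 0 → y ≠ 1 → (∀ k : ℕ, 0 < k → k ≤ r → x ^ k ≠ y) →
      F r x⁻¹ y⁻¹ = x ^ (r * (r + 1) / 2) * y ^ 2 * F r x y := by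
  induction r with
  | zero =>
    intro y hy hy1 _
    have h1 : (1 : K) - y ≠ 0 := sub_ne_zero.mpr (Ne.symm hy1)
    have h1' : y - 1 ≠ 0 := sub_ne_zero.mpr hy1
    simp only [F, Nat.zero_mul, Nat.zero_div, pow_zero, one_mul]
    rw [show (1 : K) - y⁻¹ = (y - 1) / y by field_simp, div_pow, one_div, inv_div]
    rw [div_eq_iff (pow_ne_zero 2 h1')]
    field_simp
    ring
  | succ r ih =>
    intro y hy hy1 hxy
    have hxr : x ^ (r + 1) ≠ 0 := pow_ne_zero _ hx
    have hxr1 : x ^ (r + 1) ≠ 1 := hx1 _ (Nat.succ_pos r)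
    have hxry : x ^ (r + 1) - y ≠ 0 := sub_ne_zero.mpr (hxy (r + 1) (Nat.succ_pos r) le_rfl)
    have h1y : (1 : K) - y ≠ 0 := sub_ne_zero.mpr (Ne.symm hy1)
    have ih1 := ih y hy hy1 (fun k hk hkr => hxy k hk (hkr.trans (Nat.le_succ r)))
    have ih2 : F r x⁻¹ (x ^ (r + 1))⁻¹
        = x ^ (r * (r + 1) / 2) * (x ^ (r + 1)) ^ 2 * F r x (x ^ (r + 1)) := by
      refine ih _ hxr hxr1 (fun k hk hkr h => ?_)
      have he : x ^ k * x ^ (r + 1 - k) = x ^ k * 1 := by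
        rw [mul_one, ← pow_add, show k + (r + 1 - k) = r + 1 by omega]
        exact h.symm
      exact hx1 (r + 1 - k) (Nat.sub_pos_of_lt (Nat.lt_succ_of_le hkr)) (mul_left_cancel₀ (pow_ne_zero k hx) he)
    have hS : (r + 1) * (r + 1 + 1) / 2 = r * (r + 1) / 2 + (r + 1) := by
      have h : (r + 1) * (r + 1 + 1) = r * (r + 1) + (r + 1) * 2 := by ring
      rw [h, Nat.add_mul_div_right _ _ (by norm_num : 0 < 2)]
    have hinv1 : (x ^ (r + 1))⁻¹ - y⁻¹ ≠ 0 := by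
      rw [sub_ne_zero]
      exact fun h => hxry (sub_eq_zero.mpr (inv_injective h))
    have hinv2 : (1 : K) - y⁻¹ ≠ 0 := by
      rw [sub_ne_zero]
      exact fun h => hy1 (inv_eq_one.mp h.symm)
    simp only [F, inv_pow, ih1, ih2, hS]
    rw [← mul_div_assoc, div_eq_div_iff (mul_ne_zero hinv1 hinv2) (mul_ne_zero hxry h1y)]
    field_simp
    ring

/-- The functional equation `F_r(x,y) = x^{−r(r+1)/2} y^{−2} F_r(1/x, 1/y)`
as an identity in the field of rational functions in two variables. -/
theorem stmt7 (r : ℕ) :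
    letI K := FractionRing (MvPolynomial (Fin 2) ℚ)
    let X : K := algebraMap (MvPolynomial (Fin 2) ℚ) K (MvPolynomial.X 0)
    let Y : K := algebraMap (MvPolynomial (Fin 2) ℚ) K (MvPolynomial.X 1)
    F r X Y = X ^ (-((r : ℤ) * (r + 1) / 2)) * Y ^ (-2 : ℤ) * F r X⁻¹ Y⁻¹ := by
  intro X Y
  have hinj : Function.Injective
      (algebraMap (MvPolynomial (Fin 2) ℚ) (FractionRing (MvPolynomial (Fin 2) ℚ))) :=
    IsFractionRing.injective _ _
  have hpoly : ∀ p q : MvPolynomial (Fin 2) ℚ,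
      (∃ v : Fin 2 → ℚ, MvPolynomial.eval v p ≠ MvPolynomial.eval v q) →
      algebraMap (MvPolynomial (Fin 2) ℚ) (FractionRing (MvPolynomial (Fin 2) ℚ)) p ≠
        algebraMap (MvPolynomial (Fin 2) ℚ) (FractionRing (MvPolynomial (Fin 2) ℚ)) q := by
    intro p q ⟨v, hv⟩ h
    exact hv (by rw [hinj h])
  have hX : X ≠ 0 := (map_ne_zero_iff _ hinj).mpr (MvPolynomial.X_ne_zero (R := ℚ) 0)
  have hY : Y ≠ 0 := (map_ne_zero_iff _ hinj).mpr (MvPolynomial.X_ne_zero (R := ℚ) 1)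
  have hY1 : Y ≠ 1 := by
    have h := hpoly (MvPolynomial.X 1) 1 ⟨fun _ => 0, by simp⟩
    rw [map_one] at h
    exact h
  have hX1 : ∀ k : ℕ, 0 < k → X ^ k ≠ 1 := by
    intro k hk
    have h := hpoly (MvPolynomial.X 0 ^ k) 1 ⟨fun _ => 0, by simp [zero_pow hk.ne']⟩
    rw [map_pow, map_one] at h
    exact h
  have hXY : ∀ k : ℕ, 0 < k → X ^ k ≠ Y := by
    intro k hk
    have h := hpoly (MvPolynomial.X 0 ^ k) (MvPolynomial.X 1)
      ⟨fun i => if i = 0 then 0 else 1, by simp [zero_pow hk.ne']⟩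
    rw [map_pow] at h
    exact h
  have hkey := key_s7 r X hX hX1 Y hY hY1 (fun k hk _ => hXY k hk)
  have hzz : (-((r : ℤ) * (r + 1) / 2)) = -((r * (r + 1) / 2 : ℕ) : ℤ) := by
    have h1 : ((r : ℤ) * (r + 1)) = ((r * (r + 1) : ℕ) : ℤ) := by push_cast; ring
    rw [h1]
    omega
  rw [hkey, hzz, zpow_neg, zpow_natCast,
    show ((-2 : ℤ)) = -((2 : ℕ) : ℤ) from rfl, zpow_neg, zpow_natCast]
  field_simp
end

section
/- Define F_r(x) = F_{r−1}(x, x^r) for r ≥ 1 and F_0(x) = 1, where F_0(x,y) = 1/(1−y)² and F_r(x,y) = (F_{r−1}(x,x^r)x^r − F_{r−1}(x,y)y)/((x^r − y)(1 − y)). Then F_r(x) = x^{−r(r+3)/2} F_r(1/x) as an identity of rational functions, for every r ≥ 0. -/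
/-- `F_r(x) = F_{r-1}(x, x^r)` for `r ≥ 1`, and `F_0(x) = 1`. -/
noncomputable def F1 {K : Type*} [Field K] : ℕ → K → K
  | 0, _ => 1
  | r + 1, x => F r x (x ^ (r + 1))

namespace Stmt8Aux

noncomputable abbrev K : Type := FractionRing (Polynomial ℚ)
noncomputable def X : K := algebraMap (Polynomial ℚ) K Polynomial.X

lemma hX : (X : K) ≠ 0 := by
  have h := IsFractionRing.injective (Polynomial ℚ) K
  intro h0
  exact Polynomial.X_ne_zero (h (by simpa [X] using h0))

lemma X_pow_inj {a b : ℕ} (h : (X : K) ^ a = X ^ b) : a = b := by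
  have hinj := IsFractionRing.injective (Polynomial ℚ) K
  have h' : (Polynomial.X : Polynomial ℚ) ^ a = Polynomial.X ^ b := by
    apply hinj; simpa [X, map_pow] using h
  have := congrArg Polynomial.natDegree h'
  simpa using this

lemma hsub {a b : ℕ} (h : a ≠ b) : (X : K) ^ a - X ^ b ≠ 0 :=
  sub_ne_zero.2 fun he => h (X_pow_inj he)

lemma hone {m : ℕ} (h : m ≠ 0) : (1 : K) - X ^ m ≠ 0 := by
  have := hsub (a := 0) (b := m) (Ne.symm h)
  simpa using this

lemma hone' {m : ℕ} (h : m ≠ 0) : (X : K) ^ m - 1 ≠ 0 := by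
  have := hsub (a := m) (b := 0) h
  simpa using this

lemma dinv1 {m : ℕ} : (1 : K) - (X ^ m)⁻¹ = (X ^ m - 1) * (X ^ m)⁻¹ := by
  have ha : (X : K) ^ m ≠ 0 := pow_ne_zero _ hX
  field_simp

lemma dinv2 {a b : ℕ} : ((X : K) ^ a)⁻¹ - (X ^ b)⁻¹ =
    (X ^ b - X ^ a) * ((X ^ a)⁻¹ * (X ^ b)⁻¹) := by
  have ha : (X : K) ^ a ≠ 0 := pow_ne_zero _ hX
  have hb : (X : K) ^ b ≠ 0 := pow_ne_zero _ hX
  field_simp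

/-- `e r = r(r+1)/2`. -/
def e : ℕ → ℕ
  | 0 => 0
  | s + 1 => e s + (s + 1)

lemma two_e (s : ℕ) : 2 * e s = s * (s + 1) := by
  induction s with
  | zero => rfl
  | succ s ih => rw [e, Nat.mul_add, ih]; ring

lemma key : ∀ r n : ℕ, r < n →
    (X : K) ^ (e r + 2 * n) * F r X (X ^ n) = F r X⁻¹ (X⁻¹ ^ n) := by
  intro r
  induction r with
  | zero =>
    intro n hn
    simp only [F, e, inv_pow, dinv1]
    have h1 : (1 : K) - X ^ n ≠ 0 := hone (by omega)
    have h2 : (X : K) ^ n - 1 ≠ 0 := hone' (by omega)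
    have h3 : (X : K) ^ n ≠ 0 := pow_ne_zero _ hX
    field_simp
    ring
  | succ r IH =>
    intro n hn
    have e1 : F r X (X ^ (r + 1)) =
        ((X : K) ^ (e r + 2 * (r + 1)))⁻¹ * F r X⁻¹ (X⁻¹ ^ (r + 1)) := by
      rw [← IH (r + 1) (by omega), inv_mul_cancel_left₀ (pow_ne_zero _ hX)]
    have e2 : F r X (X ^ n) =
        ((X : K) ^ (e r + 2 * n))⁻¹ * F r X⁻¹ (X⁻¹ ^ n) := by
      rw [← IH n (by omega), inv_mul_cancel_left₀ (pow_ne_zero _ hX)]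
    simp only [F, e, e1, e2, inv_pow, dinv1, dinv2]
    have h1 : (1 : K) - X ^ n ≠ 0 := hone (by omega)
    have h2 : (X : K) ^ n - 1 ≠ 0 := hone' (by omega)
    have h3 : (X : K) ^ (r + 1) - X ^ n ≠ 0 := hsub (by omega)
    have h4 : (X : K) ^ n - X ^ (r + 1) ≠ 0 := hsub (by omega)
    have h5 : (X : K) ≠ 0 := hX
    set A := F r X⁻¹ ((X ^ (r + 1) : K)⁻¹) with hA
    set B := F r X⁻¹ ((X ^ n : K)⁻¹) with hB
    field_simp
    ring

end Stmt8Aux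

/-- The functional equation `F_r(x) = x^{−r(r+3)/2} F_r(1/x)` as an identity
of rational functions in one variable. -/
theorem stmt8 (r : ℕ) :
    letI K := FractionRing (Polynomial ℚ)
    let X : K := algebraMap (Polynomial ℚ) K Polynomial.X
    F1 r X = X ^ (-((r : ℤ) * (r + 3) / 2)) * F1 r X⁻¹ := by
  show F1 r Stmt8Aux.X = Stmt8Aux.X ^ (-((r : ℤ) * (r + 3) / 2)) * F1 r Stmt8Aux.X⁻¹
  match r with
  | 0 => norm_num [F1]
  | s + 1 =>
    simp only [F1]
    have hk := Stmt8Aux.key s (s + 1) (by omega)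
    have hm : (2 : ℤ) * ((Stmt8Aux.e s : ℤ) + 2 * (s + 1)) =
        ((s : ℤ) + 1) * ((s : ℤ) + 1 + 3) := by
      have h := Stmt8Aux.two_e s
      have h' : (2 : ℤ) * (Stmt8Aux.e s : ℤ) = (s : ℤ) * ((s : ℤ) + 1) := by exact_mod_cast h
      linear_combination h'
    have hexp : (-(((s + 1 : ℕ) : ℤ) * (((s + 1 : ℕ) : ℤ) + 3) / 2)) =
        -((Stmt8Aux.e s + 2 * (s + 1) : ℕ) : ℤ) := by
      push_cast
      rw [← hm, Int.mul_ediv_cancel_left _ two_ne_zero]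
    rw [hexp, zpow_neg, zpow_natCast, ← hk,
      inv_mul_cancel_left₀ (pow_ne_zero _ Stmt8Aux.hX)]
end

section
/- The number of pairs ((c_1,c_2),(d_1,d_2)) of nonnegative integers with c_1 ≤ c_2, c_1 + c_2 = k, d_1 ≤ d_2, d_1 ≤ c_1, d_2 ≤ c_2 has generating function Σ_{k≥0} α_2(k) x^k = (1 + x + x²)/((1−x)⁴(1+x)³) = (1−x³)/((1−x)²(1−x²)³). -/
/-- `alphaP r k` counts pairs `((c_1,…,c_r),(d_1,…,d_r))` of nonnegative integer
tuples with `c_1 ≤ ⋯ ≤ c_r`, `∑ c_i = k`, `d_1 ≤ ⋯ ≤ d_r`, and `d_i ≤ c_i`. -/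
noncomputable def alphaP (r k : ℕ) : ℕ :=
  Nat.card {p : (Fin r → ℕ) × (Fin r → ℕ) //
    Monotone p.1 ∧ (∑ i, p.1 i) = k ∧ Monotone p.2 ∧ ∀ i, p.2 i ≤ p.1 i}


def Fk (k : ℕ) : Finset (ℕ × ℕ × ℕ) :=
  (Finset.range (k+1) ×ˢ Finset.range (k+1) ×ˢ Finset.range (k+1)).filter
    (fun q => 2*q.1 ≤ k ∧ q.2.1 ≤ q.2.2 ∧ q.2.1 ≤ q.1 ∧ q.2.2 ≤ k - q.1)

lemma mono2 {f : Fin 2 → ℕ} (h : f 0 ≤ f 1) : Monotone f := by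
  intro i j hij
  fin_cases i <;> fin_cases j <;> simp_all <;> omega

lemma alphaP_two (k : ℕ) : alphaP 2 k = (Fk k).card := by
  rw [alphaP, ← Nat.card_eq_finsetCard]
  apply Nat.card_congr
  refine ⟨fun p => ⟨(p.1.1 0, p.1.2 0, p.1.2 1), ?_⟩,
         fun q => ⟨(![q.1.1, k - q.1.1], ![q.1.2.1, q.1.2.2]), ?_⟩, ?_, ?_⟩
  · obtain ⟨⟨c, d⟩, hm1, hs, hm2, hle⟩ := p
    have h1 : c 0 ≤ c 1 := hm1 (by decide : (0:Fin 2) ≤ 1)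
    have h2 : d 0 ≤ d 1 := hm2 (by decide : (0:Fin 2) ≤ 1)
    have hs' : c 0 + c 1 = k := by simpa [Fin.sum_univ_two] using hs
    have hle0 : d 0 ≤ c 0 := hle 0
    have hle1 : d 1 ≤ c 1 := hle 1
    simp only [Fk, Finset.mem_filter, Finset.mem_product, Finset.mem_range]
    refine ⟨⟨?_, ?_, ?_⟩, ?_, ?_, ?_, ?_⟩ <;> omega
  · obtain ⟨⟨c1, d1, d2⟩, hq⟩ := q
    simp only [Fk, Finset.mem_filter, Finset.mem_product, Finset.mem_range] at hq
    obtain ⟨⟨_, _, _⟩, h1, h2, h3, h4⟩ := hq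
    refine ⟨mono2 (by simp; omega), ?_, mono2 (by simp; omega), ?_⟩
    · simp [Fin.sum_univ_two]; omega
    · rw [Fin.forall_fin_two]; simp; omega
  · rintro ⟨⟨c, d⟩, hm1, hs, hm2, hle⟩
    have hs' : c 0 + c 1 = k := by simpa [Fin.sum_univ_two] using hs
    ext i
    · fin_cases i <;> simp <;> omega
    · fin_cases i <;> simp
  · rintro ⟨⟨c1, d1, d2⟩, hq⟩
    simp

lemma card_Fk (k : ℕ) : (Fk k).card =
    ∑ c ∈ Finset.range (k+1), ∑ d1 ∈ Finset.range (k+1),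
      (if 2*c ≤ k ∧ d1 ≤ c then k + 1 - c - d1 else 0) := by
  rw [Fk, Finset.card_filter, Finset.sum_product]
  refine Finset.sum_congr rfl fun c _ => ?_
  rw [Finset.sum_product]
  refine Finset.sum_congr rfl fun d1 _ => ?_
  by_cases h : 2*c ≤ k ∧ d1 ≤ c
  · rw [if_pos h]
    rw [← Finset.card_filter]
    have : Finset.filter (fun d2 => 2*c ≤ k ∧ d1 ≤ d2 ∧ d1 ≤ c ∧ d2 ≤ k - c)
        (Finset.range (k+1)) = Finset.Icc d1 (k - c) := by
      ext d2
      simp only [Finset.mem_filter, Finset.mem_range, Finset.mem_Icc]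
      omega
    rw [this, Nat.card_Icc]
    omega
  · rw [if_neg h]
    refine Finset.sum_eq_zero fun d2 _ => ?_
    rw [if_neg]
    tauto

lemma gaussSum2 (K : ℤ) (n : ℕ) :
    (∑ d ∈ Finset.range n, (K - (d:ℤ))) * 2 = n * (2*K - n + 1) := by
  induction n with
  | zero => simp
  | succ n ih =>
    rw [Finset.sum_range_succ, add_mul, ih]
    push_cast
    ring

lemma cubicSum (K : ℤ) (n : ℕ) :
    ∑ c ∈ Finset.range n, ((c:ℤ)+1)*(2*K-3*c) = n*(n+1)*(K-n+1) := by
  induction n with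
  | zero => simp
  | succ n ih =>
    rw [Finset.sum_range_succ, ih]
    push_cast
    ring

lemma alphaP_key (m k : ℕ) (hk : k = 2*m ∨ k = 2*m+1) :
    (alphaP 2 k : ℤ) * 2 = (m+1)*(m+2)*((k:ℤ)+1-m) := by
  rw [alphaP_two, card_Fk]
  push_cast [Nat.cast_sum]
  rw [← Finset.sum_subset (Finset.range_subset_range.2 (by omega : m+1 ≤ k+1))
      (fun c _ hc => Finset.sum_eq_zero fun d1 _ => by
        rw [if_neg]; simp at hc ⊢; omega)]
  have step1 : ∀ c ∈ Finset.range (m+1),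
      (∑ d1 ∈ Finset.range (k+1),
        (if 2*c ≤ k ∧ d1 ≤ c then ((k + 1 - c - d1 : ℕ) : ℤ) else 0)) * 2
      = ((c:ℤ)+1)*(2*(k+1)-3*c) := by
    intro c hc
    simp only [Finset.mem_range] at hc
    have h2c : 2*c ≤ k := by omega
    rw [← Finset.sum_subset (Finset.range_subset_range.2 (by omega : c+1 ≤ k+1))
        (fun d1 _ hd => by rw [if_neg]; simp at hd; omega)]
    have : ∀ d1 ∈ Finset.range (c+1),
        (if 2*c ≤ k ∧ d1 ≤ c then ((k + 1 - c - d1 : ℕ) : ℤ) else 0)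
        = ((k:ℤ) + 1 - c) - d1 := by
      intro d1 hd
      simp only [Finset.mem_range] at hd
      rw [if_pos ⟨h2c, by omega⟩]
      omega
    rw [Finset.sum_congr rfl this, gaussSum2 ((k:ℤ)+1-c) (c+1)]
    push_cast
    ring
  calc (∑ c ∈ Finset.range (m+1), ∑ d1 ∈ Finset.range (k+1),
        (if 2*c ≤ k ∧ d1 ≤ c then ((k + 1 - c - d1 : ℕ) : ℤ) else 0)) * 2
      = ∑ c ∈ Finset.range (m+1), ((c:ℤ)+1)*(2*(k+1)-3*c) := by
        rw [Finset.sum_mul]; exact Finset.sum_congr rfl step1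
    _ = (m+1)*(m+2)*((k:ℤ)+1-m) := by
        rw [cubicSum ((k:ℤ)+1) (m+1)]; push_cast; ring

lemma ch2 (m : ℕ) : ((m+2).choose 2 : ℝ) * 2 = (m+1)*(m+2) := by
  have : (m+2).choose 2 * 2 = (m+1)*(m+2) := by
    induction m with
    | zero => rfl
    | succ n ih =>
      rw [show n+1+2 = (n+2)+1 from rfl, Nat.choose_succ_succ (n+2) 1,
        Nat.choose_one_right, add_mul, ih]
      ring
  exact_mod_cast this

lemma ch3 (m : ℕ) : ((m+3).choose 3 : ℝ) * 6 = (m+1)*(m+2)*(m+3) := by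
  have : (m+3).choose 3 * 6 = (m+1)*(m+2)*(m+3) := by
    induction m with
    | zero => rfl
    | succ n ih =>
      have h2 : (n+3).choose 2 * 2 = (n+2)*(n+3) := by
        have := ch2 (n+1)
        push_cast at this
        exact_mod_cast this
      rw [show n+1+3 = (n+3)+1 from rfl, Nat.choose_succ_succ (n+3) 2, add_mul, ih]
      nlinarith [h2]
  exact_mod_cast this

lemma aeven (m : ℕ) : (alphaP 2 (2*m) : ℝ)
    = 3*((m+3).choose 3 : ℝ) - 2*((m+2).choose 2 : ℝ) := by
  have h := alphaP_key m (2*m) (Or.inl rfl)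
  have hR : (alphaP 2 (2*m) : ℝ) * 2 = ((m:ℝ)+1)*((m:ℝ)+2)*((2*m:ℝ)+1-m) := by
    exact_mod_cast h
  linear_combination hR/2 - (ch3 m)/2 + (ch2 m)

lemma aodd (m : ℕ) : (alphaP 2 (2*m+1) : ℝ)
    = 3*((m+3).choose 3 : ℝ) - ((m+2).choose 2 : ℝ) := by
  have h := alphaP_key m (2*m+1) (Or.inr rfl)
  have hR : (alphaP 2 (2*m+1) : ℝ) * 2 = ((m:ℝ)+1)*((m:ℝ)+2)*((2*m:ℝ)+2-m) := by
    exact_mod_cast h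
  linear_combination hR/2 - (ch3 m)/2 + (ch2 m)/2

theorem stmt10 (x : ℝ) (hx : |x| < 1) :
    (∑' k : ℕ, (alphaP 2 k : ℝ) * x ^ k = (1 + x + x ^ 2) / ((1 - x) ^ 4 * (1 + x) ^ 3)) ∧
    (∑' k : ℕ, (alphaP 2 k : ℝ) * x ^ k = (1 - x ^ 3) / ((1 - x) ^ 2 * (1 - x ^ 2) ^ 3)) := by
  obtain ⟨hxl, hxr⟩ := abs_lt.mp hx
  have hx1 : (1:ℝ) - x ≠ 0 := by intro h; nlinarith
  have hx2 : (1:ℝ) + x ≠ 0 := by intro h; nlinarith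
  have hxsq : (1:ℝ) - x^2 ≠ 0 := by intro h; nlinarith
  have hy : ‖x^2‖ < 1 := by
    rw [Real.norm_eq_abs, abs_pow]
    exact pow_lt_one₀ (abs_nonneg x) hx (by norm_num)
  have h3 : HasSum (fun m : ℕ => ((m+3).choose 3 : ℝ) * (x^2)^m) (1/(1-x^2)^4) :=
    hasSum_choose_mul_geometric_of_norm_lt_one 3 hy
  have h2 : HasSum (fun m : ℕ => ((m+2).choose 2 : ℝ) * (x^2)^m) (1/(1-x^2)^3) :=
    hasSum_choose_mul_geometric_of_norm_lt_one 2 hy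
  have hev : HasSum (fun m : ℕ => (alphaP 2 (2*m) : ℝ) * x^(2*m))
      (3*(1/(1-x^2)^4) - 2*(1/(1-x^2)^3)) := by
    have hfun : (fun m : ℕ => (alphaP 2 (2*m) : ℝ) * x^(2*m))
        = fun m : ℕ => 3*(((m+3).choose 3 : ℝ) * (x^2)^m)
            - 2*(((m+2).choose 2 : ℝ) * (x^2)^m) := by
      funext m
      rw [aeven, pow_mul]
      ring
    rw [hfun]
    exact (h3.mul_left 3).sub (h2.mul_left 2)
  have hodd : HasSum (fun m : ℕ => (alphaP 2 (2*m+1) : ℝ) * x^(2*m+1))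
      (x * (3*(1/(1-x^2)^4) - 1/(1-x^2)^3)) := by
    have hfun : (fun m : ℕ => (alphaP 2 (2*m+1) : ℝ) * x^(2*m+1))
        = fun m : ℕ => x * (3*(((m+3).choose 3 : ℝ) * (x^2)^m)
            - ((m+2).choose 2 : ℝ) * (x^2)^m) := by
      funext m
      rw [aodd, pow_succ, pow_mul]
      ring
    rw [hfun]
    exact ((h3.mul_left 3).sub h2).mul_left x
  have htot : HasSum (fun k : ℕ => (alphaP 2 k : ℝ) * x^k)
      ((3*(1/(1-x^2)^4) - 2*(1/(1-x^2)^3)) + x * (3*(1/(1-x^2)^4) - 1/(1-x^2)^3)) :=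
    HasSum.even_add_odd hev hodd
  rw [htot.tsum_eq]
  constructor
  · field_simp
    ring
  · field_simp
    ring
end

section
/- Let α(k) count pairs ((c_1,...,c_k),(d_1,...,d_k)) with 0 ≤ c_1 ≤ ⋯ ≤ c_k, Σc_i = k, 0 ≤ d_1 ≤ ⋯ ≤ d_k, d_i ≤ c_i. Then the power series F(x) = Σ_{k≥0} α(k) x^k has radius of convergence at least 1, i.e. for every ε > 0, α(k) = O((1+ε)^k). -/
open Finset Filter


/-- Recover a bounded monotone function from its "level counts". -/
lemma mono_recover {n m : ℕ} (c : Fin n → ℕ) (hm : Monotone c) (hb : ∀ i, c i ≤ m) (i : Fin n) :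
    c i = ((Finset.range m).filter
      (fun j => (Finset.univ.filter (fun i' : Fin n => c i' ≤ j)).card ≤ i.val)).card := by
  have key : ∀ j, ((Finset.univ.filter (fun i' : Fin n => c i' ≤ j)).card ≤ i.val ↔ j < c i) := by
    intro j
    constructor
    · intro h
      by_contra hc
      push_neg at hc
      have hsub : Finset.Iic i ⊆ Finset.univ.filter (fun i' => c i' ≤ j) := by
        intro i' hi'
        simp only [Finset.mem_Iic] at hi'
        simp only [Finset.mem_filter, Finset.mem_univ, true_and]
        exact le_trans (hm hi') hc
      have hcard := Finset.card_le_card hsub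
      rw [Fin.card_Iic] at hcard
      omega
    · intro h
      have hsub : Finset.univ.filter (fun i' : Fin n => c i' ≤ j) ⊆ Finset.Iio i := by
        intro i' hi'
        simp only [Finset.mem_filter, Finset.mem_univ, true_and] at hi'
        simp only [Finset.mem_Iio]
        by_contra hge
        push_neg at hge
        have := hm hge
        omega
      have hcard := Finset.card_le_card hsub
      rw [Fin.card_Iio] at hcard
      omega
  have h1 : ((Finset.range m).filter
      (fun j => (Finset.univ.filter (fun i' : Fin n => c i' ≤ j)).card ≤ i.val)) = Finset.range (c i) := by
    ext j
    simp only [Finset.mem_filter, Finset.mem_range, key]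
    have := hb i
    omega
  rw [h1, Finset.card_range]

lemma card_mono_bdd (n m : ℕ) :
    Nat.card {c : Fin n → ℕ // Monotone c ∧ ∀ i, c i ≤ m} ≤ (n + 1) ^ m := by
  have key : Nat.card {c : Fin n → ℕ // Monotone c ∧ ∀ i, c i ≤ m}
      ≤ Nat.card (Fin m → Fin (n + 1)) := by
    apply Nat.card_le_card_of_injective
      (f := fun c (j : Fin m) =>
        (⟨(Finset.univ.filter (fun i' : Fin n => c.1 i' ≤ j.val)).card, by
          have := Finset.card_filter_le (Finset.univ : Finset (Fin n)) (fun i' => c.1 i' ≤ j.val)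
          simp only [Finset.card_univ, Fintype.card_fin] at this
          omega⟩ : Fin (n + 1)))
    intro c c' h
    ext i
    rw [mono_recover c.1 c.2.1 c.2.2 i, mono_recover c'.1 c'.2.1 c'.2.2 i]
    congr 1
    apply Finset.filter_congr
    intro j hj
    simp only [Finset.mem_range] at hj
    have := congrFun h ⟨j, hj⟩
    simp only [Fin.mk.injEq] at this
    rw [this]
  simpa [Nat.card_eq_fintype_card] using key

instance mono_bdd_finite (n m : ℕ) : Finite {c : Fin n → ℕ // Monotone c ∧ ∀ i, c i ≤ m} := by
  apply Finite.of_injective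
    (f := fun c (i : Fin n) => (⟨c.1 i, Nat.lt_succ_of_le (c.2.2 i)⟩ : Fin (m + 1)))
  intro c c' h
  ext i
  exact congrArg Fin.val (congrFun h i)

instance mono_sum_finite (k m : ℕ) : Finite {c : Fin k → ℕ // Monotone c ∧ ∑ i, c i ≤ m} := by
  apply Finite.of_injective
    (f := fun c (i : Fin k) => (⟨c.1 i, Nat.lt_succ_of_le (le_trans
      (Finset.single_le_sum (fun i _ => Nat.zero_le _) (Finset.mem_univ i)) c.2.2)⟩ : Fin (m + 1)))
  intro c c' h
  ext i
  exact congrArg Fin.val (congrFun h i)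

lemma small_entry {k : ℕ} {c : Fin k → ℕ} (hm : Monotone c) (hs : ∑ i, c i ≤ k)
    {i : Fin k} (hi : i.val + Nat.sqrt k < k) : c i ≤ Nat.sqrt k := by
  set s := Nat.sqrt k with hsdef
  have h1 : (Finset.Ici i).card * c i ≤ ∑ i', c i' := by
    calc (Finset.Ici i).card * c i = ∑ _i' ∈ Finset.Ici i, c i := by
          rw [Finset.sum_const, smul_eq_mul]
    _ ≤ ∑ i' ∈ Finset.Ici i, c i' := Finset.sum_le_sum (fun i' hi' => hm (Finset.mem_Ici.mp hi'))
    _ ≤ ∑ i', c i' := Finset.sum_le_sum_of_subset (Finset.subset_univ _)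
  rw [Fin.card_Ici] at h1
  have h2 : k < (s + 1) * (s + 1) := Nat.lt_succ_sqrt k
  have h3 : (s + 1) * c i ≤ (k - i.val) * c i := Nat.mul_le_mul_right _ (by omega)
  have h4 : (s + 1) * c i < (s + 1) * (s + 1) := by omega
  exact Nat.lt_succ_iff.mp (Nat.lt_of_mul_lt_mul_left h4)

lemma card_mono_sum_le (k : ℕ) :
    Nat.card {c : Fin k → ℕ // Monotone c ∧ ∑ i, c i ≤ k} ≤ (k + 1) ^ (2 * Nat.sqrt k) := by
  set s := Nat.sqrt k with hsdef
  have hsk : s ≤ k := Nat.sqrt_le_self k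
  have key : Nat.card {c : Fin k → ℕ // Monotone c ∧ ∑ i, c i ≤ k}
      ≤ Nat.card ({a : Fin k → ℕ // Monotone a ∧ ∀ i, a i ≤ s} × (Fin s → Fin (k + 1))) := by
    apply Nat.card_le_card_of_injective (f := fun c =>
      (⟨fun i => min (c.1 i) s, fun i i' hii' => min_le_min (c.2.1 hii') le_rfl,
        fun i => min_le_right _ _⟩,
       fun j => ⟨c.1 ⟨k - s + j.val, by have := j.2; omega⟩, Nat.lt_succ_of_le (le_trans
         (Finset.single_le_sum (fun i _ => Nat.zero_le _) (Finset.mem_univ _)) c.2.2)⟩))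
    intro c c' h
    have h1 := congrArg Prod.fst h
    have h2 := congrArg Prod.snd h
    simp only [Subtype.mk.injEq] at h1
    ext i
    by_cases hcase : i.val + s < k
    · have e1 : c.1 i ≤ s := small_entry c.2.1 c.2.2 hcase
      have e2 : c'.1 i ≤ s := small_entry c'.2.1 c'.2.2 hcase
      have := congrFun h1 i
      simpa [min_eq_left e1, min_eq_left e2] using this
    · push_neg at hcase
      have hjlt : i.val - (k - s) < s := by omega
      have := congrFun h2 ⟨i.val - (k - s), hjlt⟩
      simp only [Fin.mk.injEq] at this
      have hidx : (⟨k - s + (i.val - (k - s)), by omega⟩ : Fin k) = i := by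
        apply Fin.ext
        simp only
        omega
      rwa [hidx] at this
  calc Nat.card {c : Fin k → ℕ // Monotone c ∧ ∑ i, c i ≤ k}
      ≤ Nat.card ({a : Fin k → ℕ // Monotone a ∧ ∀ i, a i ≤ s} × (Fin s → Fin (k + 1))) := key
    _ = Nat.card {a : Fin k → ℕ // Monotone a ∧ ∀ i, a i ≤ s} * Nat.card (Fin s → Fin (k + 1)) :=
        Nat.card_prod _ _
    _ ≤ (k + 1) ^ s * (k + 1) ^ s := by
        apply Nat.mul_le_mul (card_mono_bdd k s)
        simp [Nat.card_eq_fintype_card]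
    _ = (k + 1) ^ (2 * s) := by ring

lemma alphaP_le (k : ℕ) : alphaP k k ≤ (k + 1) ^ (4 * Nat.sqrt k) := by
  have key : alphaP k k ≤ Nat.card ({c : Fin k → ℕ // Monotone c ∧ ∑ i, c i ≤ k} ×
      {c : Fin k → ℕ // Monotone c ∧ ∑ i, c i ≤ k}) := by
    apply Nat.card_le_card_of_injective (f := fun p =>
      (⟨p.1.1, p.2.1, le_of_eq p.2.2.1⟩,
       ⟨p.1.2, p.2.2.2.1, le_trans (Finset.sum_le_sum (fun i _ => p.2.2.2.2 i)) (le_of_eq p.2.2.1)⟩))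
    intro p p' h
    have h1 := congrArg (fun q => (q.1.1 : Fin k → ℕ)) h
    have h2 := congrArg (fun q => (q.2.1 : Fin k → ℕ)) h
    exact Subtype.ext (Prod.ext h1 h2)
  calc alphaP k k ≤ _ := key
    _ = Nat.card {c : Fin k → ℕ // Monotone c ∧ ∑ i, c i ≤ k} *
        Nat.card {c : Fin k → ℕ // Monotone c ∧ ∑ i, c i ≤ k} := Nat.card_prod _ _
    _ ≤ (k + 1) ^ (2 * Nat.sqrt k) * (k + 1) ^ (2 * Nat.sqrt k) :=
        Nat.mul_le_mul (card_mono_sum_le k) (card_mono_sum_le k)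
    _ = (k + 1) ^ (4 * Nat.sqrt k) := by ring

lemma growth (ε : ℝ) (hε : 0 < ε) :
    ∃ C : ℝ, ∀ k : ℕ, ((k : ℝ) + 1) ^ (4 * Nat.sqrt k) ≤ C * (1 + ε) ^ k := by
  set L := Real.log (1 + ε) with hLdef
  have hL0 : 0 < L := Real.log_pos (by linarith)
  set g : ℕ → ℝ := fun k => ((k : ℝ) + 1) ^ (4 * Nat.sqrt k) / (1 + ε) ^ k with hg
  have hgexp : ∀ k : ℕ, g k =
      Real.exp (((4 * Nat.sqrt k : ℕ) : ℝ) * Real.log ((k : ℝ) + 1) - (k : ℝ) * L) := by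
    intro k
    rw [Real.exp_sub, Real.exp_nat_mul, Real.exp_nat_mul,
      Real.exp_log (by positivity), Real.exp_log (by linarith)]
  set F : ℝ → ℝ := fun x => 16 * x ^ (3/4 : ℝ) - (x - 1) * L with hF
  -- step A : pointwise bound
  have stepA : ∀ k : ℕ, ((4 * Nat.sqrt k : ℕ) : ℝ) * Real.log ((k : ℝ) + 1) - (k : ℝ) * L
      ≤ F ((k : ℝ) + 1) := by
    intro k
    have hx0 : (0 : ℝ) < (k : ℝ) + 1 := by positivity
    have a1 : ((Nat.sqrt k : ℕ) : ℝ) ≤ ((k : ℝ) + 1) ^ (1/2 : ℝ) := by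
      rw [← Real.sqrt_eq_rpow]
      rw [Real.le_sqrt (by positivity) (by positivity)]
      have h1 : ((Nat.sqrt k : ℝ)) ^ 2 ≤ (k : ℝ) := by exact_mod_cast Nat.sqrt_le' k
      linarith
    have a2 : Real.log ((k : ℝ) + 1) ≤ 4 * ((k : ℝ) + 1) ^ (1/4 : ℝ) := by
      have := Real.log_le_rpow_div (le_of_lt hx0) (by norm_num : (0:ℝ) < 1/4)
      linarith
    have hlog0 : 0 ≤ Real.log ((k : ℝ) + 1) := Real.log_nonneg (by linarith [(Nat.cast_nonneg k : (0:ℝ) ≤ (k:ℝ))])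
    have a3 : ((4 * Nat.sqrt k : ℕ) : ℝ) * Real.log ((k : ℝ) + 1)
        ≤ 16 * ((k : ℝ) + 1) ^ (3/4 : ℝ) := by
      have : ((4 * Nat.sqrt k : ℕ) : ℝ) * Real.log ((k : ℝ) + 1)
          ≤ (4 * ((k : ℝ) + 1) ^ (1/2 : ℝ)) * (4 * ((k : ℝ) + 1) ^ (1/4 : ℝ)) := by
        apply mul_le_mul _ a2 hlog0 (by positivity)
        push_cast
        linarith
      calc ((4 * Nat.sqrt k : ℕ) : ℝ) * Real.log ((k : ℝ) + 1)
          ≤ (4 * ((k : ℝ) + 1) ^ (1/2 : ℝ)) * (4 * ((k : ℝ) + 1) ^ (1/4 : ℝ)) := this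
        _ = 16 * (((k : ℝ) + 1) ^ (1/2 : ℝ) * ((k : ℝ) + 1) ^ (1/4 : ℝ)) := by ring
        _ = 16 * ((k : ℝ) + 1) ^ (3/4 : ℝ) := by
            rw [← Real.rpow_add hx0]; norm_num
    have : (k : ℝ) * L = (((k : ℝ) + 1) - 1) * L := by ring
    rw [hF]
    simp only
    linarith
  -- step B : F ∘ (k+1) tends to -∞
  have stepB : Filter.Tendsto (fun k : ℕ => F ((k : ℝ) + 1)) Filter.atTop Filter.atBot := by
    have hFG : Filter.Tendsto F Filter.atTop Filter.atBot := by
      have hinner : Filter.Tendsto (fun x : ℝ => 16 * x ^ (-(1/4) : ℝ) - L)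
          Filter.atTop (nhds (-L)) := by
        have h0 : Filter.Tendsto (fun x : ℝ => x ^ (-(1/4) : ℝ)) Filter.atTop (nhds 0) :=
          tendsto_rpow_neg_atTop (by norm_num)
        have := (h0.const_mul 16).sub_const L
        simpa using this
      have hmul : Filter.Tendsto (fun x : ℝ => x * (16 * x ^ (-(1/4) : ℝ) - L))
          Filter.atTop Filter.atBot :=
        Filter.Tendsto.atTop_mul_neg (by linarith) Filter.tendsto_id hinner
      have hadd : Filter.Tendsto (fun x : ℝ => x * (16 * x ^ (-(1/4) : ℝ) - L) + L)
          Filter.atTop Filter.atBot := Filter.tendsto_atBot_add_const_right _ L hmul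
      apply hadd.congr'
      filter_upwards [Filter.eventually_ge_atTop (1 : ℝ)] with x hx
      have hx0 : (0 : ℝ) < x := by linarith
      have hr : x * x ^ (-(1/4) : ℝ) = x ^ (3/4 : ℝ) := by
        nth_rewrite 1 [← Real.rpow_one x]
        rw [← Real.rpow_add hx0]
        norm_num
      rw [hF]
      simp only
      rw [← hr]
      ring
    exact hFG.comp (Filter.tendsto_atTop_add_const_right _ 1 tendsto_natCast_atTop_atTop)
  have hgtend : Filter.Tendsto g Filter.atTop (nhds 0) := by
    have hh : Filter.Tendsto
        (fun k : ℕ => ((4 * Nat.sqrt k : ℕ) : ℝ) * Real.log ((k : ℝ) + 1) - (k : ℝ) * L)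
        Filter.atTop Filter.atBot :=
      Filter.tendsto_atBot_mono stepA stepB
    have := Real.tendsto_exp_atBot.comp hh
    apply this.congr
    intro k
    exact (hgexp k).symm
  obtain ⟨C, hC⟩ := hgtend.bddAbove_range
  refine ⟨C, fun k => ?_⟩
  have hgk : g k ≤ C := hC ⟨k, rfl⟩
  have hpow : (0 : ℝ) < (1 + ε) ^ k := by positivity
  rw [hg] at hgk
  simp only at hgk
  calc ((k : ℝ) + 1) ^ (4 * Nat.sqrt k)
      = ((k : ℝ) + 1) ^ (4 * Nat.sqrt k) / (1 + ε) ^ k * (1 + ε) ^ k := by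
        field_simp
    _ ≤ C * (1 + ε) ^ k := mul_le_mul_of_nonneg_right hgk (le_of_lt hpow)

/-- The power series `F(x) = Σ α(k) x^k` (with `α(k) = alphaP k k`) has radius of
convergence at least 1: for every `ε > 0`, `α(k) = O((1+ε)^k)`. -/
theorem stmt12 (ε : ℝ) (hε : 0 < ε) :
    ∃ C : ℝ, ∀ k : ℕ, (alphaP k k : ℝ) ≤ C * (1 + ε) ^ k := by
  obtain ⟨C, hC⟩ := growth ε hε
  refine ⟨C, fun k => ?_⟩
  calc (alphaP k k : ℝ) ≤ (((k + 1) ^ (4 * Nat.sqrt k) : ℕ) : ℝ) := by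
        exact_mod_cast alphaP_le k
    _ = ((k : ℝ) + 1) ^ (4 * Nat.sqrt k) := by push_cast; ring
    _ ≤ C * (1 + ε) ^ k := hC k
end

section
/- Let A_2 be the multiplicative function determined by A_2(p^k) = α_2(k), where α_2(k) counts pairs ((c_1,c_2),(d_1,d_2)) of nonnegative integers with c_1 ≤ c_2, c_1 + c_2 = k, d_1 ≤ d_2, d_1 ≤ c_1, d_2 ≤ c_2. Then for Re(s) > 1, Σ_{n=1}^∞ A_2(n) n^{−s} = ζ(s)² ζ(2s)³ / ζ(3s). -/
/-- `A r` is the multiplicative function with `A r (p^k) = alphaP r k`. -/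
noncomputable def Afun (r n : ℕ) : ℕ :=
  if n = 0 then 0 else ∏ p ∈ n.primeFactors, alphaP r (n.factorization p)

/-!
`A_2` is multiplicative, so it suffices to compare local factors: at every prime `p` the
generating function of `A_2(p^k) = α_2(k)` is `(1 - X³) / ((1 - X)² (1 - X²)³)`. Equivalently,
`1_{cubes} * A_2 = 1 * 1 * 1_{squares} * 1_{squares} * 1_{squares}` as Dirichlet convolutions,
and the `L`-series of the indicator of `r`-th powers is `ζ(r s)`. The local identity is the
equality of two generating functions of weighted sets, proved by an explicit weight-preserving
bijection `ℕ × {type pairs} ≃ ℕ⁵`.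
-/

open Finset PowerSeries LSeries

open scoped LSeries.notation

theorem Nat.Coprime.exists_pow_eq_mul_iff {m n r : ℕ} (h : m.Coprime n) :
    (∃ c, c ^ r = m * n) ↔ (∃ a, a ^ r = m) ∧ ∃ b, b ^ r = n := by
  constructor
  · rintro ⟨c, hc⟩
    obtain ⟨a, ha⟩ := exists_eq_pow_of_mul_eq_pow (Nat.isUnit_iff.2 h) hc.symm
    obtain ⟨b, hb⟩ := exists_eq_pow_of_mul_eq_pow (Nat.isUnit_iff.2 h.symm)
      ((mul_comm n m).trans hc.symm)
    exact ⟨⟨a, ha.symm⟩, b, hb.symm⟩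
  · rintro ⟨⟨a, rfl⟩, b, rfl⟩
    exact ⟨a * b, mul_pow a b r⟩

theorem Fin.monotone_two_iff {α : Type*} [Preorder α] {f : Fin 2 → α} :
    Monotone f ↔ f 0 ≤ f 1 := by
  simp [Fin.monotone_iff_le_succ]

theorem LSeriesSummable.of_norm_le {f g : ℕ → ℂ} {s : ℂ} (hg : LSeriesSummable g s)
    (h : ∀ n, ‖f n‖ ≤ ‖g n‖) : LSeriesSummable f s :=
  Summable.of_norm_bounded (summable_norm_iff.2 hg) fun n => norm_term_le s (h n)

theorem LSeries_eq_tsum_succ (f : ℕ → ℂ) (s : ℂ) :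
    LSeries f s = ∑' n : ℕ, f (n + 1) / (n + 1 : ℂ) ^ s := by
  have hsupp : Function.support (term f s) ⊆ Set.range Nat.succ := by
    rintro (_ | m) hn
    · exact absurd (term_zero f s) hn
    · exact ⟨m, rfl⟩
  rw [LSeries, ← Nat.succ_injective.tsum_eq hsupp]
  refine tsum_congr fun n => ?_
  rw [term_of_ne_zero n.succ_ne_zero, Nat.succ_eq_add_one, Nat.cast_add_one]

theorem LSeriesHasSum.natCoe_mul {f g : ArithmeticFunction ℕ} {s a b : ℂ}
    (hf : LSeriesHasSum ↗f s a) (hg : LSeriesHasSum ↗g s b) :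
    LSeriesHasSum ↗(f * g) s (a * b) := by
  simpa [← ArithmeticFunction.natCoe_apply] using
    ArithmeticFunction.LSeriesHasSum_mul (f := (f : ArithmeticFunction ℂ)) (g := g)
      (by simpa [← ArithmeticFunction.natCoe_apply] using hf)
      (by simpa [← ArithmeticFunction.natCoe_apply] using hg)

namespace PowerSeries

variable {α β : Type*}

noncomputable def weightSeries (w : α → ℕ) : ℕ⟦X⟧ :=
  mk fun k => Nat.card {a // w a = k}

theorem coeff_weightSeries (w : α → ℕ) (k : ℕ) :
    coeff k (weightSeries w) = Nat.card {a // w a = k} :=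
  coeff_mk _ _

theorem weightSeries_congr {w : α → ℕ} {w' : β → ℕ} (e : α ≃ β) (he : ∀ a, w' (e a) = w a) :
    weightSeries w' = weightSeries w := by
  ext k
  simp only [coeff_weightSeries]
  exact Nat.card_congr (e.subtypeEquiv fun a => by rw [he]).symm

theorem subsingleton_weight_mul_left {r : ℕ} (hr : r ≠ 0) (k : ℕ) :
    Subsingleton {n // r * n = k} :=
  ⟨fun m n => Subtype.ext (Nat.eq_of_mul_eq_mul_left (Nat.pos_of_ne_zero hr) (m.2.trans n.2.symm))⟩

theorem finite_weight_mul_left {r : ℕ} (hr : r ≠ 0) (k : ℕ) : Finite {n // r * n = k} :=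
  have := subsingleton_weight_mul_left hr k
  Finite.of_subsingleton

theorem coeff_weightSeries_mul_left {r : ℕ} (hr : r ≠ 0) (k : ℕ) :
    coeff k (weightSeries (r * · : ℕ → ℕ)) = if r ∣ k then 1 else 0 := by
  rw [coeff_weightSeries]
  split_ifs with h
  · obtain ⟨n, rfl⟩ := h
    exact Nat.card_eq_one_iff_exists.2
      ⟨⟨n, rfl⟩, fun m => (subsingleton_weight_mul_left hr _).elim _ _⟩
  · have : IsEmpty {n // r * n = k} := ⟨fun n => h ⟨n.1, n.2.symm⟩⟩
    exact Nat.card_of_isEmpty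

def fiberProdEquiv (w : α → ℕ) (w' : β → ℕ) (k : ℕ) :
    {x : α × β // w x.1 + w' x.2 = k} ≃
      Σ ij : antidiagonal k, {a // w a = ij.1.1} × {b // w' b = ij.1.2} where
  toFun x := ⟨⟨(w x.1.1, w' x.1.2), mem_antidiagonal.2 x.2⟩, ⟨x.1.1, rfl⟩, ⟨x.1.2, rfl⟩⟩
  invFun y := ⟨(y.2.1, y.2.2), by rw [y.2.1.2, y.2.2.2]; exact mem_antidiagonal.1 y.1.2⟩
  left_inv _ := rfl
  right_inv := by
    rintro ⟨⟨⟨i, j⟩, hij⟩, ⟨a, ha⟩, ⟨b, hb⟩⟩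
    dsimp only at ha hb
    subst ha hb
    rfl

theorem finite_weight_prod {w : α → ℕ} {w' : β → ℕ} (hw : ∀ k, Finite {a // w a = k})
    (hw' : ∀ k, Finite {b // w' b = k}) (k : ℕ) :
    Finite {x : α × β // w x.1 + w' x.2 = k} :=
  Finite.of_equiv _ (fiberProdEquiv w w' k).symm

theorem weightSeries_prod {w : α → ℕ} {w' : β → ℕ} (hw : ∀ k, Finite {a // w a = k})
    (hw' : ∀ k, Finite {b // w' b = k}) :
    weightSeries (fun x : α × β => w x.1 + w' x.2) = weightSeries w * weightSeries w' := by
  ext k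
  rw [coeff_mul, coeff_weightSeries, Nat.card_congr (fiberProdEquiv w w' k), Nat.card_sigma,
    ← sum_coe_sort (antidiagonal k)]
  simp only [Nat.card_prod, coeff_weightSeries]

end PowerSeries

namespace ArithmeticFunction

section PrimePowerSeries

variable {R : Type*} [CommSemiring R]

theorem mul_apply_prime_pow {p : ℕ} (hp : p.Prime) (f g : ArithmeticFunction R) (k : ℕ) :
    (f * g) (p ^ k) = ∑ x ∈ antidiagonal k, f (p ^ x.1) * g (p ^ x.2) := by
  rw [mul_apply, Nat.sum_divisorsAntidiagonal (f · * g ·), Nat.sum_divisors_prime_pow hp,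
    Nat.sum_antidiagonal_eq_sum_range_succ (fun i j => f (p ^ i) * g (p ^ j))]
  refine sum_congr rfl fun i hi => ?_
  rw [Nat.pow_div (by simpa [Nat.lt_succ_iff] using hi) hp.pos]

/-- The local factor of `f` at `p`, with `X` standing for `p⁻ˢ`. -/
noncomputable def primePowerSeries (p : Nat.Primes) : ArithmeticFunction R →+* R⟦X⟧ where
  toFun f := mk fun k => f ((p : ℕ) ^ k)
  map_zero' := by ext; simp
  map_add' f g := by ext; simp
  map_one' := by ext k; simp [one_apply, coeff_one, p.prop.ne_one]
  map_mul' f g := by ext k; simp [coeff_mul, mul_apply_prime_pow p.prop]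

theorem coeff_primePowerSeries (p : Nat.Primes) (f : ArithmeticFunction R) (k : ℕ) :
    coeff k (primePowerSeries p f) = f ((p : ℕ) ^ k) := by
  simp [primePowerSeries]

theorem IsMultiplicative.eq_of_primePowerSeries_eq {f g : ArithmeticFunction R}
    (hf : f.IsMultiplicative) (hg : g.IsMultiplicative)
    (h : ∀ p, primePowerSeries p f = primePowerSeries p g) : f = g :=
  (eq_iff_eq_on_prime_powers f hf g hg).2 fun p k hp =>
    (coeff_primePowerSeries ⟨p, hp⟩ f k).symm.trans
      ((PowerSeries.ext_iff.mp (h ⟨p, hp⟩) k).trans (coeff_primePowerSeries ⟨p, hp⟩ g k))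

end PrimePowerSeries

theorem apply_le_mul_apply {f g : ArithmeticFunction ℕ} (hg : g 1 = 1) (n : ℕ) :
    f n ≤ (g * f) n := by
  rcases eq_or_ne n 0 with rfl | hn
  · simp
  have hmem : (1, n) ∈ n.divisorsAntidiagonal := Nat.mem_divisorsAntidiagonal.2 ⟨one_mul n, hn⟩
  simpa [hg] using single_le_sum (f := fun x => g x.1 * f x.2) (fun _ _ => Nat.zero_le _) hmem

section PowIndicator

open scoped Classical in
noncomputable def powIndicator (r : ℕ) : ArithmeticFunction ℕ :=
  ⟨fun n => if n ≠ 0 ∧ ∃ m, m ^ r = n then 1 else 0, by simp⟩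

open scoped Classical in
theorem powIndicator_apply (r n : ℕ) :
    powIndicator r n = if n ≠ 0 ∧ ∃ m, m ^ r = n then 1 else 0 :=
  rfl

theorem isMultiplicative_powIndicator (r : ℕ) : (powIndicator r).IsMultiplicative := by
  refine IsMultiplicative.iff_ne_zero.2 ⟨by simp [powIndicator_apply], fun {m n} hm hn h => ?_⟩
  simp only [powIndicator_apply, h.exists_pow_eq_mul_iff, ne_eq, mul_eq_zero, hm, hn, or_self,
    not_false_eq_true, true_and]
  split_ifs <;> simp_all

theorem powIndicator_apply_prime_pow {p r : ℕ} (hp : p.Prime) (hr : r ≠ 0) (k : ℕ) :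
    powIndicator r (p ^ k) = if r ∣ k then 1 else 0 := by
  have : (∃ m, m ^ r = p ^ k) ↔ r ∣ k := by
    constructor
    · rintro ⟨m, hm⟩
      obtain ⟨i, -, rfl⟩ := (Nat.dvd_prime_pow hp).1 (hm ▸ dvd_pow_self m hr)
      rw [← pow_mul] at hm
      exact ⟨i, by rw [← Nat.pow_right_injective hp.two_le hm, mul_comm]⟩
    · rintro ⟨i, rfl⟩
      exact ⟨p ^ i, by rw [← pow_mul, mul_comm]⟩
  simp [powIndicator_apply, this, hp.ne_zero]

theorem primePowerSeries_powIndicator (p : Nat.Primes) {r : ℕ} (hr : r ≠ 0) :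
    primePowerSeries p (powIndicator r) = weightSeries (r * ·) := by
  ext k
  rw [coeff_primePowerSeries, powIndicator_apply_prime_pow p.prop hr,
    coeff_weightSeries_mul_left hr]

theorem LSeriesSummable_powIndicator (r : ℕ) {s : ℂ} (hs : 1 < s.re) :
    LSeriesSummable ↗(powIndicator r) s :=
  LSeriesSummable_of_bounded_of_one_lt_re (m := 1) (fun n _ => by
    rw [powIndicator_apply]; split_ifs <;> simp) hs

theorem LSeries_powIndicator {r : ℕ} (hr : r ≠ 0) (s : ℂ) :
    LSeries ↗(powIndicator r) s = LSeries 1 (r * s) := by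
  have hterm (m : ℕ) : term ↗(powIndicator r) s (m ^ r) = term 1 (r * s) m := by
    rcases eq_or_ne m 0 with rfl | hm
    · simp [zero_pow hr]
    rw [term_of_ne_zero (pow_ne_zero r hm), term_of_ne_zero hm, powIndicator_apply,
      if_pos ⟨pow_ne_zero r hm, m, rfl⟩, Nat.cast_one, Pi.one_apply, Nat.cast_pow,
      Complex.natCast_cpow_natCast_mul]
  have hsupp : Function.support (term ↗(powIndicator r) s) ⊆ Set.range (· ^ r) := by
    intro n hn
    by_contra h
    refine hn ?_
    rcases eq_or_ne n 0 with rfl | hn0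
    · exact term_zero _ _
    rw [term_of_ne_zero hn0, powIndicator_apply, if_neg (fun h' => h h'.2), Nat.cast_zero,
      zero_div]
  rw [LSeries, LSeries, ← (Nat.pow_left_injective hr).tsum_eq hsupp]
  exact tsum_congr hterm

theorem LSeriesHasSum_powIndicator {r : ℕ} (hr : r ≠ 0) {s : ℂ} (hs : 1 < s.re) :
    LSeriesHasSum ↗(powIndicator r) s (riemannZeta (r * s)) := by
  have hrs : 1 < ((r : ℂ) * s).re := by
    have : (1 : ℝ) ≤ r := by exact_mod_cast Nat.one_le_iff_ne_zero.2 hr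
    simp only [Complex.mul_re, Complex.natCast_re, Complex.natCast_im, zero_mul, sub_zero]
    nlinarith
  rw [← LSeries_one_eq_riemannZeta hrs, ← LSeries_powIndicator hr]
  exact (LSeriesSummable_powIndicator r hs).LSeriesHasSum

end PowIndicator

end ArithmeticFunction

open ArithmeticFunction

theorem alphaP_zero (r : ℕ) : alphaP r 0 = 1 := by
  refine Nat.card_eq_one_iff_exists.2
    ⟨⟨0, monotone_const, by simp, monotone_const, fun _ => le_rfl⟩, ?_⟩
  rintro ⟨⟨c, d⟩, -, hc, -, hdc⟩
  obtain rfl : c = 0 := funext fun i => (sum_eq_zero_iff.1 hc) i (mem_univ i)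
  obtain rfl : d = 0 := funext fun i => Nat.le_zero.1 (hdc i)
  rfl

theorem Afun_eq_factorization_prod (r : ℕ) {n : ℕ} (hn : n ≠ 0) :
    Afun r n = n.factorization.prod fun _ k => alphaP r k := by
  rw [Afun, if_neg hn, Nat.prod_factorization_eq_prod_primeFactors]

namespace Afun

noncomputable def toArithmeticFunction (r : ℕ) : ArithmeticFunction ℕ :=
  ⟨Afun r, by simp [Afun]⟩

theorem toArithmeticFunction_apply (r n : ℕ) : toArithmeticFunction r n = Afun r n :=
  rfl

theorem isMultiplicative_toArithmeticFunction (r : ℕ) :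
    (toArithmeticFunction r).IsMultiplicative := by
  refine IsMultiplicative.iff_ne_zero.2
    ⟨by simp [toArithmeticFunction_apply, Afun], fun {m n} hm hn h => ?_⟩
  simp only [toArithmeticFunction_apply, Afun_eq_factorization_prod r (mul_ne_zero hm hn),
    Afun_eq_factorization_prod r hm, Afun_eq_factorization_prod r hn,
    Nat.factorization_mul_of_coprime h]
  exact Finsupp.prod_add_index_of_disjoint h.disjoint_primeFactors _

theorem toArithmeticFunction_apply_prime_pow (r : ℕ) {p : ℕ} (hp : p.Prime) (k : ℕ) :
    toArithmeticFunction r (p ^ k) = alphaP r k := by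
  rw [toArithmeticFunction_apply, Afun_eq_factorization_prod r (pow_ne_zero k hp.ne_zero),
    hp.factorization_pow, Finsupp.prod_single_index (h := fun _ k => alphaP r k) (alphaP_zero r)]

end Afun

/-- A pair of partitions `c₁ ≤ c₂`, `d₁ ≤ d₂` with `d ≤ c`: the types of an abelian `p`-group
`ℤ/p^c₁ × ℤ/p^c₂` and of one of its subgroups. -/
@[ext]
structure TypePair where
  c₁ : ℕ
  c₂ : ℕ
  d₁ : ℕ
  d₂ : ℕ
  hc : c₁ ≤ c₂
  hd : d₁ ≤ d₂
  h₁ : d₁ ≤ c₁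
  h₂ : d₂ ≤ c₂

namespace TypePair

def size (t : TypePair) : ℕ := t.c₁ + t.c₂

theorem finite_size_eq (k : ℕ) : Finite {t : TypePair // t.size = k} := by
  have hb (t : {t : TypePair // t.size = k}) : t.1.c₁ < k + 1 ∧ t.1.c₂ < k + 1 ∧
      t.1.d₁ < k + 1 ∧ t.1.d₂ < k + 1 := by
    obtain ⟨⟨c₁, c₂, d₁, d₂, -, -, h₁, h₂⟩, ht⟩ := t
    dsimp only [size] at ht ⊢
    omega
  refine Finite.of_injective (β := Fin (k + 1) × Fin (k + 1) × Fin (k + 1) × Fin (k + 1))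
    (fun t => (⟨_, (hb t).1⟩, ⟨_, (hb t).2.1⟩, ⟨_, (hb t).2.2.1⟩, ⟨_, (hb t).2.2.2⟩)) ?_
  intro s t h
  simp only [Prod.mk.injEq, Fin.mk.injEq] at h
  exact Subtype.ext (TypePair.ext h.1 h.2.1 h.2.2.1 h.2.2.2)

theorem alphaP_two_eq_card (k : ℕ) : alphaP 2 k = Nat.card {t : TypePair // t.size = k} :=
  Nat.card_congr
    { toFun p := ⟨⟨p.1.1 0, p.1.1 1, p.1.2 0, p.1.2 1, Fin.monotone_two_iff.1 p.2.1,
        Fin.monotone_two_iff.1 p.2.2.2.1, p.2.2.2.2 0, p.2.2.2.2 1⟩,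
        by simpa [size, Fin.sum_univ_two] using p.2.2.1⟩
      invFun t := ⟨(![t.1.c₁, t.1.c₂], ![t.1.d₁, t.1.d₂]), Fin.monotone_two_iff.2 t.1.hc,
        by simpa [Fin.sum_univ_two, size] using t.2, Fin.monotone_two_iff.2 t.1.hd,
        Fin.forall_fin_two.2 ⟨t.1.h₁, t.1.h₂⟩⟩
      left_inv p := by
        ext i <;> fin_cases i <;> rfl
      right_inv t := rfl }

/-- The residue of `a` mod 3 records whether `c₁ ≤ d₂` (residues 0 and 1, which then also
give the parity of `d₂ - c₁`) or `d₂ < c₁` (residue 2). -/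
def prodEquiv : ℕ × TypePair ≃ ℕ × ℕ × ℕ × ℕ × ℕ where
  toFun x :=
    let ⟨j, ⟨c₁, c₂, d₁, d₂, _, _, _, _⟩⟩ := x
    if c₁ ≤ d₂ then (3 * j + (d₂ - c₁) % 2, c₂ - d₂, d₁, c₁ - d₁, (d₂ - c₁) / 2)
    else (3 * j + 2, c₂ - c₁, d₁, d₂ - d₁, c₁ - d₂ - 1)
  invFun y :=
    let ⟨a, b, c, d, e⟩ := y
    if a % 3 ≤ 1 then
      (a / 3, ⟨c + d, c + d + 2 * e + a % 3 + b, c, c + d + 2 * e + a % 3,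
        by omega, by omega, by omega, by omega⟩)
    else
      (a / 3, ⟨c + d + e + 1, c + d + e + 1 + b, c, c + d, by omega, by omega, by omega, by omega⟩)
  left_inv := by
    rintro ⟨j, ⟨c₁, c₂, d₁, d₂, hc, hd, h₁, h₂⟩⟩
    dsimp only
    split_ifs <;> dsimp only at * <;> ext <;> simp <;> omega
  right_inv := by
    rintro ⟨a, b, c, d, e⟩
    dsimp only
    split_ifs <;> dsimp only at * <;> ext <;> simp <;> omega

theorem prodEquiv_weight (x : ℕ × TypePair) :
    (fun y : ℕ × ℕ × ℕ × ℕ × ℕ => 1 * y.1 + (1 * y.2.1 + (2 * y.2.2.1 + (2 * y.2.2.2.1 +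
      2 * y.2.2.2.2)))) (prodEquiv x) = 3 * x.1 + x.2.size := by
  obtain ⟨j, ⟨c₁, c₂, d₁, d₂, hc, hd, h₁, h₂⟩⟩ := x
  simp only [prodEquiv, Equiv.coe_fn_mk, size]
  split_ifs <;> dsimp only <;> omega

end TypePair

theorem primePowerSeries_Afun_two (p : Nat.Primes) :
    primePowerSeries p (Afun.toArithmeticFunction 2) = weightSeries TypePair.size := by
  ext k
  rw [coeff_primePowerSeries, Afun.toArithmeticFunction_apply_prime_pow 2 p.prop,
    TypePair.alphaP_two_eq_card, coeff_weightSeries]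

theorem powIndicator_three_mul_Afun_two :
    powIndicator 3 * Afun.toArithmeticFunction 2 = powIndicator 1 ^ 2 * powIndicator 2 ^ 3 := by
  refine ((isMultiplicative_powIndicator 3).mul
    (Afun.isMultiplicative_toArithmeticFunction 2)).eq_of_primePowerSeries_eq
    ((isMultiplicative_powIndicator 1).pow.mul (isMultiplicative_powIndicator 2).pow)
    fun p => ?_
  have h₁ := finite_weight_mul_left one_ne_zero
  have h₂ := finite_weight_mul_left two_ne_zero
  have h₃ := finite_weight_mul_left three_ne_zero
  simp only [map_mul, map_pow, primePowerSeries_powIndicator p one_ne_zero,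
    primePowerSeries_powIndicator p two_ne_zero, primePowerSeries_powIndicator p three_ne_zero,
    primePowerSeries_Afun_two]
  rw [← weightSeries_prod h₃ TypePair.finite_size_eq, sq, pow_three, mul_assoc,
    ← weightSeries_prod h₂ h₂, ← weightSeries_prod h₂ (finite_weight_prod h₂ h₂),
    ← weightSeries_prod h₁ (finite_weight_prod h₂ (finite_weight_prod h₂ h₂)),
    ← weightSeries_prod h₁ (finite_weight_prod h₁ (finite_weight_prod h₂
      (finite_weight_prod h₂ h₂)))]
  exact (weightSeries_congr TypePair.prodEquiv TypePair.prodEquiv_weight).symm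

theorem stmt15 (s : ℂ) (hs : 1 < s.re) :
    ∑' n : ℕ, (Afun 2 (n + 1) : ℂ) / (n + 1 : ℂ) ^ s =
      riemannZeta s ^ 2 * riemannZeta (2 * s) ^ 3 / riemannZeta (3 * s) := by
  have hζ {r : ℕ} (hr : r ≠ 0) := LSeriesHasSum_powIndicator hr hs
  have hRHS : LSeriesHasSum ↗(powIndicator 3 * Afun.toArithmeticFunction 2) s
      (riemannZeta s ^ 2 * riemannZeta (2 * s) ^ 3) := by
    rw [powIndicator_three_mul_Afun_two, sq, pow_three]
    convert ((hζ one_ne_zero).natCoe_mul (hζ one_ne_zero)).natCoe_mul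
      ((hζ two_ne_zero).natCoe_mul ((hζ two_ne_zero).natCoe_mul (hζ two_ne_zero))) using 1
    simp only [Nat.cast_one, one_mul, Nat.cast_ofNat]
    ring
  have hA : LSeriesSummable ↗(Afun.toArithmeticFunction 2) s :=
    hRHS.LSeriesSummable.of_norm_le fun n => by
      simp only [Complex.norm_natCast, Nat.cast_le]
      exact apply_le_mul_apply (isMultiplicative_powIndicator 3).map_one n
  have hLHS := (hζ three_ne_zero).natCoe_mul hA.LSeriesHasSum
  have hζ3 : riemannZeta (3 * s) ≠ 0 := riemannZeta_ne_zero_of_one_lt_re (by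
    simp only [Complex.mul_re]; norm_num; linarith)
  have key : riemannZeta (3 * s) * LSeries ↗(Afun.toArithmeticFunction 2) s =
      riemannZeta s ^ 2 * riemannZeta (2 * s) ^ 3 := by
    exact_mod_cast hLHS.unique hRHS
  rw [eq_div_iff hζ3, mul_comm, ← key, LSeries_eq_tsum_succ]
  rfl
end

section
/- One has F_3(x) = (1 + 2x + 2x² + x³ + x⁴)(1 + x + 2x² + 2x³ + x⁴) / ((1−x)⁶(1+x)³(1+x+x²)⁴), where F_3(x) = F_2(x, x³) with F_r(x,y) defined by F_0(x,y)=1/(1−y)² and F_r(x,y) = (F_{r−1}(x,x^r)x^r − F_{r−1}(x,y)y)/((x^r−y)(1−y)). -/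
/-!
Since `x (1 - y)² - y (1 - x)² = (x - y)(1 - x y)`, one step of the recursion gives the closed form
`F₁(x, y) = (1 - x y) / ((1 - x)² (1 - y)³)`. Substituting it into the recursion for `F₂(x, x³)`
leaves an identity of rational functions, valid whenever no denominator vanishes, i.e. for `x`
different from `0`, `-1` and the cube roots of unity; the indeterminate `X` is such an element.
-/

open Polynomial

theorem F_succ {K : Type*} [Field K] (r : ℕ) (x y : K) :
    F (r + 1) x y =
      (F r x (x ^ (r + 1)) * x ^ (r + 1) - F r x y * y) / ((x ^ (r + 1) - y) * (1 - y)) :=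
  rfl

theorem F_one {K : Type*} [Field K] {x y : K} (hx : x ≠ 1) (hy : y ≠ 1) (hxy : x ≠ y) :
    F 1 x y = (1 - x * y) / ((1 - x) ^ 2 * (1 - y) ^ 3) := by
  have hx' : 1 - x ≠ 0 := sub_ne_zero.2 hx.symm
  have hy' : 1 - y ≠ 0 := sub_ne_zero.2 hy.symm
  have hxy' : x - y ≠ 0 := sub_ne_zero.2 hxy
  rw [F_succ, F, F, pow_one]
  field_simp
  ring

theorem F_two_pow_three {K : Type*} [Field K] {x : K} (h0 : x ≠ 0) (h1 : x ≠ -1)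
    (h3 : x ^ 3 ≠ 1) :
    F 2 x (x ^ 3) =
      (1 + 2 * x + 2 * x ^ 2 + x ^ 3 + x ^ 4) * (1 + x + 2 * x ^ 2 + 2 * x ^ 3 + x ^ 4) /
        ((1 - x) ^ 6 * (1 + x) ^ 3 * (1 + x + x ^ 2) ^ 4) := by
  have hx1 : x ≠ 1 := by rintro rfl; simp at h3
  have ha : 1 - x ≠ 0 := sub_ne_zero.2 hx1.symm
  have hb : 1 + x ≠ 0 := by rwa [add_comm, Ne, add_eq_zero_iff_eq_neg]
  have hc : 1 + x + x ^ 2 ≠ 0 := fun h ↦ h3 (by linear_combination (x - 1) * h)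
  have hx2 : x ^ 2 ≠ 1 := fun h ↦ mul_ne_zero ha hb (by linear_combination -h)
  have hxx2 : x ≠ x ^ 2 := fun h ↦ mul_ne_zero h0 ha (by linear_combination h)
  have hxx3 : x ≠ x ^ 3 := fun h ↦ mul_ne_zero (mul_ne_zero h0 ha) hb (by linear_combination h)
  have hd : x ^ 2 - x ^ 3 ≠ 0 :=
    fun h ↦ mul_ne_zero (pow_ne_zero 2 h0) ha (by linear_combination h)
  rw [F_succ, F_one hx1 hx2 hxx2, F_one hx1 h3 hxx3]
  field_simp
  ring

/-- `F_3(x) = F_2(x, x³) = (1+2x+2x²+x³+x⁴)(1+x+2x²+2x³+x⁴)/((1−x)⁶(1+x)³(1+x+x²)⁴)`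
as an identity of rational functions in one variable. -/
theorem stmt16 :
    letI K := FractionRing (Polynomial ℚ)
    let X : K := algebraMap (Polynomial ℚ) K Polynomial.X
    F 2 X (X ^ 3) =
      (1 + 2 * X + 2 * X ^ 2 + X ^ 3 + X ^ 4) * (1 + X + 2 * X ^ 2 + 2 * X ^ 3 + X ^ 4) /
        ((1 - X) ^ 6 * (1 + X) ^ 3 * (1 + X + X ^ 2) ^ 4) := by
  intro X
  have hinj : Function.Injective (algebraMap ℚ[X] (FractionRing ℚ[X])) :=
    IsFractionRing.injective _ _
  refine F_two_pow_three ?_ ?_ ?_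
  · exact (map_ne_zero_iff _ hinj).2 X_ne_zero
  · rw [← map_one (algebraMap ℚ[X] _), ← map_neg]
    exact hinj.ne fun h ↦ by have := congrArg (eval 1) h; norm_num at this
  · rw [← map_pow, ← map_one (algebraMap ℚ[X] _)]
    exact hinj.ne fun h ↦ by have := congrArg (eval 2) h; norm_num at this
end

section
/- Let u_r(n) = Σ_{n = n_1^r n_2^{r−1} ⋯ n_r} 2^{ω(n_1)+ω(n_2)+⋯+ω(n_r)}, where the sum is over tuples (n_1,...,n_r) of positive integers with n_1^r n_2^{r−1} ⋯ n_r = n and ω(m) is the number of distinct prime factors of m. Then for Re(s) > 1, Σ_{n=1}^∞ u_r(n) n^{−s} = ∏_{m=1}^r ζ(ms)² / ζ(2ms). -/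
open Complex LSeries Finset ArithmeticFunction Nat
open scoped LSeries.notation

noncomputable def muC : ℕ → ℂ := fun n => ((ArithmeticFunction.moebius n : ℤ) : ℂ)

noncomputable def pb (m : ℕ) (f : ℕ → ℂ) : ℕ → ℂ :=
  fun n => ∑ c ∈ (Finset.Icc 1 n).filter (fun c => c ^ m = n), f c

lemma pb_apply_pow {m : ℕ} (hm : m ≠ 0) (f : ℕ → ℂ) {c : ℕ} (hc : c ≠ 0) :
    pb m f (c ^ m) = f c := by
  have h : (Finset.Icc 1 (c ^ m)).filter (fun c' => c' ^ m = c ^ m) = {c} := by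
    ext c'
    simp only [Finset.mem_filter, Finset.mem_Icc, Finset.mem_singleton]
    constructor
    · rintro ⟨⟨h1, h2⟩, h3⟩
      exact Nat.pow_left_injective hm h3
    · rintro rfl
      exact ⟨⟨Nat.one_le_iff_ne_zero.mpr hc, Nat.le_self_pow hm _⟩, rfl⟩
  rw [pb, h, Finset.sum_singleton]

lemma pb_eq_zero {m n : ℕ} (f : ℕ → ℂ) (h : ∀ c : ℕ, c ≠ 0 → c ^ m ≠ n) :
    pb m f n = 0 := by
  rw [pb, Finset.filter_false_of_mem, Finset.sum_empty]
  intro c hc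
  exact h c (by simp only [Finset.mem_Icc] at hc; omega)

lemma pb_zero (m : ℕ) (f : ℕ → ℂ) : pb m f 0 = 0 := by
  simp [pb]

lemma LSeriesHasSum_pb {m : ℕ} (hm : m ≠ 0) {f : ℕ → ℂ} {s a : ℂ}
    (h : LSeriesHasSum f ((m : ℂ) * s) a) : LSeriesHasSum (pb m f) s a := by
  unfold LSeriesHasSum at h ⊢
  have hinj : Function.Injective (fun c : ℕ => c ^ m) :=
    Nat.pow_left_injective hm
  rw [← hinj.hasSum_iff]
  · refine h.congr_fun fun c => ?_
    rcases eq_or_ne c 0 with rfl | hc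
    · simp [term_zero, hm, zero_pow hm]
    · have hcm : c ^ m ≠ 0 := pow_ne_zero _ hc
      simp only [Function.comp_apply, term_of_ne_zero hcm, term_of_ne_zero hc,
        pb_apply_pow hm f hc]
      rw [Nat.cast_pow, ← natCast_cpow_natCast_mul]
  · intro n hn
    have hn0 : n ≠ 0 := by
      rintro rfl
      exact hn ⟨0, by simp [zero_pow hm]⟩
    rw [term_of_ne_zero hn0, pb_eq_zero, zero_div]
    intro c hc hcn
    exact hn ⟨c, hcn⟩

/-- `μ` on squares, as an arithmetic function. -/
noncomputable def sqmuA : ArithmeticFunction ℂ :=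
  ⟨pb 2 muC, by simp [pb]⟩

lemma not_sq_of_not_sq {m n c : ℕ} (hm : m ≠ 0) (hmn : Nat.Coprime m n)
    (hsm : ¬∃ a : ℕ, a ≠ 0 ∧ a ^ 2 = m) (hc : c ≠ 0) (hcn : c ^ 2 = m * n) : False := by
  have hu : IsUnit (GCDMonoid.gcd m n) := by
    rw [Nat.isUnit_iff]
    exact hmn.gcd_eq_one
  obtain ⟨d, hd⟩ := exists_eq_pow_of_mul_eq_pow (α := ℕ) hu hcn.symm
  exact hsm ⟨d, fun h0 => hm (by simp [h0] at hd; exact hd), hd.symm⟩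

lemma sqmuA_isMultiplicative : sqmuA.IsMultiplicative := by
  rw [ArithmeticFunction.IsMultiplicative.iff_ne_zero]
  constructor
  · show pb 2 muC 1 = 1
    have : pb 2 muC (1 ^ 2) = muC 1 := pb_apply_pow two_ne_zero _ one_ne_zero
    simpa [muC, ArithmeticFunction.moebius_apply_one] using this
  · intro m n hm hn hmn
    show pb 2 muC (m * n) = pb 2 muC m * pb 2 muC n
    by_cases hsm : ∃ a : ℕ, a ≠ 0 ∧ a ^ 2 = m
    · obtain ⟨a, ha, rfl⟩ := hsm
      by_cases hsn : ∃ b : ℕ, b ≠ 0 ∧ b ^ 2 = n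
      · obtain ⟨b, hb, rfl⟩ := hsn
        have hab : Nat.Coprime a b := by
          have := Nat.Coprime.coprime_dvd_left (dvd_pow_self a two_ne_zero) hmn
          exact Nat.Coprime.coprime_dvd_right (dvd_pow_self b two_ne_zero) this
        rw [← mul_pow, pb_apply_pow two_ne_zero _ (mul_ne_zero ha hb),
          pb_apply_pow two_ne_zero _ ha, pb_apply_pow two_ne_zero _ hb]
        have := (ArithmeticFunction.isMultiplicative_moebius).map_mul_of_coprime hab
        simp only [muC, this]
        push_cast
        ring
      · rw [pb_eq_zero _ (fun b hb hbn => hsn ⟨b, hb, hbn⟩), mul_zero, pb_eq_zero]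
        intro c hc hcn
        exact not_sq_of_not_sq hn hmn.symm (m := n) hsn hc (by rw [hcn, mul_comm])
    · rw [pb_eq_zero _ (fun a ha han => hsm ⟨a, ha, han⟩), zero_mul, pb_eq_zero]
      intro c hc hcn
      exact not_sq_of_not_sq hm hmn hsm hc hcn

lemma sqmuA_apply_prime_pow {p : ℕ} (hp : p.Prime) (j : ℕ) :
    sqmuA (p ^ j) = if j = 0 then 1 else if j = 2 then -1 else 0 := by
  rcases Nat.even_or_odd j with ⟨t, rfl⟩ | hodd
  · have hpt : p ^ t ≠ 0 := pow_ne_zero _ hp.pos.ne'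
    have h : p ^ (t + t) = (p ^ t) ^ 2 := by ring
    have hval : sqmuA (p ^ (t + t)) = muC (p ^ t) := by
      rw [h]; exact pb_apply_pow two_ne_zero _ hpt
    rw [hval]
    rcases t with _ | _ | t
    · simp [muC]
    · simp [muC, ArithmeticFunction.moebius_apply_prime hp]
    · rw [if_neg (by omega), if_neg (by omega), muC,
        ArithmeticFunction.moebius_apply_prime_pow hp (by omega), if_neg (by omega)]
      simp
  · show pb 2 muC (p ^ j) = _
    rw [pb_eq_zero]
    · obtain ⟨t, rfl⟩ := hodd
      rw [if_neg (by omega), if_neg (by omega)]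
    · intro c hc hcj
      have hcd : c ∣ p ^ j := hcj ▸ dvd_pow_self c two_ne_zero
      obtain ⟨i, hij, rfl⟩ := (Nat.dvd_prime_pow hp).mp hcd
      rw [← pow_mul] at hcj
      have := Nat.pow_right_injective hp.two_le hcj
      obtain ⟨t, rfl⟩ := hodd
      omega

noncomputable def twoOmegaA : ArithmeticFunction ℂ :=
  ⟨fun n => if n = 0 then 0 else 2 ^ n.primeFactors.card, rfl⟩

lemma twoOmegaA_apply (n : ℕ) :
    twoOmegaA n = if n = 0 then 0 else (2 : ℂ) ^ n.primeFactors.card := rfl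

lemma twoOmegaA_isMultiplicative : twoOmegaA.IsMultiplicative := by
  rw [ArithmeticFunction.IsMultiplicative.iff_ne_zero]
  constructor
  · rw [twoOmegaA_apply]
    simp
  · intro m n hm hn hmn
    rw [twoOmegaA_apply, twoOmegaA_apply, twoOmegaA_apply,
      if_neg (mul_ne_zero hm hn), if_neg hm, if_neg hn,
      Nat.primeFactors_mul hm hn,
      Finset.card_union_of_disjoint hmn.disjoint_primeFactors, pow_add]

local notation "ZC" => ((ArithmeticFunction.zeta : ArithmeticFunction ℕ) : ArithmeticFunction ℂ)

lemma ZZ_apply_prime_pow {p : ℕ} (hp : p.Prime) (t : ℕ) :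
    (ZC * ZC) (p ^ t) = (t : ℂ) + 1 := by
  rw [ArithmeticFunction.coe_zeta_mul_apply, Nat.sum_divisors_prime_pow hp]
  have : ∀ j ∈ Finset.range (t + 1), ZC (p ^ j) = 1 := by
    intro j _
    rw [ArithmeticFunction.natCoe_apply,
      ArithmeticFunction.zeta_apply_ne (pow_ne_zero _ hp.pos.ne')]
    norm_num
  rw [Finset.sum_congr rfl this, Finset.sum_const, Finset.card_range]
  push_cast
  ring

lemma key_eq : ZC * ZC * sqmuA = twoOmegaA := by
  refine (ArithmeticFunction.IsMultiplicative.eq_iff_eq_on_prime_powers _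
    (((ArithmeticFunction.isMultiplicative_zeta.natCast).mul
      (ArithmeticFunction.isMultiplicative_zeta.natCast)).mul sqmuA_isMultiplicative) _
    twoOmegaA_isMultiplicative).mpr ?_
  intro p i hp
  have hrhs : twoOmegaA (p ^ i) = if i = 0 then 1 else 2 := by
    rw [twoOmegaA_apply, if_neg (pow_ne_zero _ hp.pos.ne')]
    rcases Nat.eq_zero_or_pos i with rfl | hi
    · simp
    · rw [Nat.primeFactors_pow _ hi.ne', hp.primeFactors]
      simp [hi.ne']
  rw [hrhs, ArithmeticFunction.mul_apply,
    Nat.sum_divisorsAntidiagonal' (f := fun a b => (ZC * ZC) a * sqmuA b)]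
  rw [Nat.sum_divisors_prime_pow hp]
  have hterm : ∀ j ∈ Finset.range (i + 1),
      (ZC * ZC) (p ^ i / p ^ j) * sqmuA (p ^ j)
        = (if j = 0 then (i : ℂ) + 1 else 0)
          + (if j = 2 then -(((i - 2 : ℕ) : ℂ) + 1) else 0) := by
    intro j hj
    rw [Finset.mem_range] at hj
    rw [Nat.pow_div (by omega) hp.pos, ZZ_apply_prime_pow hp, sqmuA_apply_prime_pow hp]
    rcases eq_or_ne j 0 with rfl | h0
    · simp
    · rcases eq_or_ne j 2 with rfl | h2
      · simp
      · simp [h0, h2]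
  rw [Finset.sum_congr rfl hterm, Finset.sum_add_distrib]
  simp only [Finset.sum_ite_eq', Finset.mem_range]
  rcases i with _ | _ | i
  · norm_num
  · norm_num
  · have h2 : 2 < i + 2 + 1 := by omega
    rw [if_pos (by omega), if_pos h2]
    push_cast [Nat.add_sub_cancel]
    ring

lemma LSeriesHasSum_twoOmega {s : ℂ} (hs : 1 < s.re) :
    LSeriesHasSum (fun n => (2 : ℂ) ^ n.primeFactors.card) s
      (riemannZeta s ^ 2 / riemannZeta (2 * s)) := by
  have h2s : 1 < (2 * s).re := by
    have : (2 * s).re = 2 * s.re := by simp [Complex.mul_re]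
    rw [this]; linarith
  have hz := ArithmeticFunction.LSeriesHasSum_zeta hs
  have hμ : LSeriesHasSum (fun n => ((ArithmeticFunction.moebius n : ℤ) : ℂ)) (2 * s)
      (riemannZeta (2 * s))⁻¹ := by
    have hsum := (ArithmeticFunction.LSeriesSummable_moebius_iff.mpr h2s).LSeriesHasSum
    have h1 := ArithmeticFunction.LSeries_zeta_mul_Lseries_moebius h2s
    rw [ArithmeticFunction.LSeries_zeta_eq_riemannZeta h2s] at h1
    rwa [(inv_eq_of_mul_eq_one_right h1).symm] at hsum
  have hpb : LSeriesHasSum (pb 2 muC) s (riemannZeta (2 * s))⁻¹ := by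
    refine LSeriesHasSum_pb two_ne_zero ?_
    rw [show ((2 : ℕ) : ℂ) = (2 : ℂ) by norm_num]
    exact hμ
  have htot := (hz.convolution hz).convolution hpb
  have hfun : ∀ {n : ℕ}, n ≠ 0 →
      ((fun n => ((ArithmeticFunction.zeta n : ℕ) : ℂ))
        ⍟ (fun n => ((ArithmeticFunction.zeta n : ℕ) : ℂ)) ⍟ pb 2 muC) n
      = (2 : ℂ) ^ n.primeFactors.card := by
    intro n hn
    have h1 : (fun n => ((ArithmeticFunction.zeta n : ℕ) : ℂ))
        = ⇑((ArithmeticFunction.zeta : ArithmeticFunction ℕ) : ArithmeticFunction ℂ) :=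
      funext fun n => (ArithmeticFunction.natCoe_apply).symm
    have h2 : pb 2 muC = ⇑sqmuA := rfl
    rw [h1, h2, ArithmeticFunction.coe_mul, ArithmeticFunction.coe_mul, key_eq,
      twoOmegaA_apply, if_neg hn]
  have := (LSeriesHasSum_congr s _ hfun).mp htot
  rwa [show riemannZeta s * riemannZeta s * (riemannZeta (2 * s))⁻¹
      = riemannZeta s ^ 2 / riemannZeta (2 * s) by rw [sq, div_eq_mul_inv]] at this

/-- `u r n = Σ_{n = n_1^r n_2^{r−1} ⋯ n_r} 2^{ω(n_1)+⋯+ω(n_r)}`, the sum being over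
tuples `(n_1,…,n_r)` of positive integers with `n_1^r n_2^{r-1} ⋯ n_r = n`, where
`ω(m)` is the number of distinct prime factors of `m`. -/
def u (r n : ℕ) : ℕ :=
  ∑ f ∈ (Fintype.piFinset fun _ : Fin r => Finset.Icc 1 n).filter
      (fun f => ∏ i : Fin r, f i ^ (r - (i : ℕ)) = n),
    2 ^ (∑ i : Fin r, (f i).primeFactors.card)

lemma u_succ (r n : ℕ) (hn : n ≠ 0) :
    u (r + 1) n = ∑ p ∈ n.divisorsAntidiagonal,
      (∑ c ∈ (Finset.Icc 1 p.1).filter (fun c => c ^ (r + 1) = p.1),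
        2 ^ c.primeFactors.card) * u r p.2 := by
  simp only [u, Finset.sum_mul_sum, ← Finset.sum_product']
  rw [Finset.sum_sigma' n.divisorsAntidiagonal
    (fun p => ((Finset.Icc 1 p.1).filter (fun c => c ^ (r + 1) = p.1)) ×ˢ
      ((Fintype.piFinset fun _ : Fin r => Finset.Icc 1 p.2).filter
        (fun g => ∏ i : Fin r, g i ^ (r - (i : ℕ)) = p.2)))
    (fun p q => 2 ^ q.1.primeFactors.card * 2 ^ (∑ i : Fin r, (q.2 i).primeFactors.card))]
  refine Finset.sum_nbij'
    (fun f => ⟨(f 0 ^ (r + 1), ∏ i : Fin r, f i.succ ^ (r - (i : ℕ))), (f 0, Fin.tail f)⟩)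
    (fun q => Fin.cons q.2.1 q.2.2) ?_ ?_ ?_ ?_ ?_
  · -- forward membership
    intro f hf
    rw [Finset.mem_filter, Fintype.mem_piFinset] at hf
    obtain ⟨hmem, hprod⟩ := hf
    have hprod' : f 0 ^ (r + 1) * ∏ i : Fin r, f i.succ ^ (r - (i : ℕ)) = n := by
      rw [← hprod, Fin.prod_univ_succ]
      congr 1
      exact Finset.prod_congr rfl fun i _ => by
        rw [Fin.val_succ, Nat.add_sub_add_right]
    have h1 : ∀ i, 1 ≤ f i := fun i => (Finset.mem_Icc.mp (hmem i)).1
    have hrest : (∏ i : Fin r, f i.succ ^ (r - (i : ℕ))) ≠ 0 :=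
      Finset.prod_ne_zero_iff.mpr fun i _ =>
        pow_ne_zero _ (Nat.one_le_iff_ne_zero.mp (h1 i.succ))
    rw [Finset.mem_sigma]
    constructor
    · exact Nat.mem_divisorsAntidiagonal.mpr ⟨hprod', hn⟩
    · rw [Finset.mem_product]
      constructor
      · rw [Finset.mem_filter, Finset.mem_Icc]
        exact ⟨⟨h1 0, Nat.le_self_pow (Nat.succ_ne_zero r) _⟩, rfl⟩
      · rw [Finset.mem_filter, Fintype.mem_piFinset]
        refine ⟨fun i => ?_, rfl⟩
        rw [Finset.mem_Icc]
        refine ⟨h1 i.succ, ?_⟩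
        have hdvd : f i.succ ^ (r - (i : ℕ)) ∣ ∏ j : Fin r, f j.succ ^ (r - (j : ℕ)) :=
          Finset.dvd_prod_of_mem _ (Finset.mem_univ i)
        have hself : f i.succ ∣ f i.succ ^ (r - (i : ℕ)) :=
          dvd_pow_self _ (by have := i.isLt; omega)
        exact Nat.le_of_dvd (Nat.pos_of_ne_zero hrest) (hself.trans hdvd)
  · -- backward membership
    intro q hq
    obtain ⟨⟨d, e⟩, c, g⟩ := q
    simp only [Finset.mem_sigma, Finset.mem_product, Finset.mem_filter, Finset.mem_Icc,
      Fintype.mem_piFinset, Nat.mem_divisorsAntidiagonal] at hq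
    obtain ⟨⟨hde, -⟩, ⟨⟨hc1, -⟩, hc⟩, hg, hge⟩ := hq
    have hd0 : d ≠ 0 := fun h => hn (by rw [← hde, h, zero_mul])
    have he0 : e ≠ 0 := fun h => hn (by rw [← hde, h, mul_zero])
    rw [Finset.mem_filter, Fintype.mem_piFinset]
    constructor
    · intro i
      rw [Finset.mem_Icc]
      refine Fin.cases ?_ ?_ i
      · simp only [Fin.cons_zero]
        exact ⟨hc1, le_trans (Nat.le_self_pow (Nat.succ_ne_zero r) _)
          (hc ▸ Nat.le_of_dvd (Nat.pos_of_ne_zero hn) ⟨e, hde.symm⟩)⟩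
      · intro j
        simp only [Fin.cons_succ]
        exact ⟨(hg j).1, le_trans (hg j).2
          (Nat.le_of_dvd (Nat.pos_of_ne_zero hn) ⟨d, by rw [← hde, Nat.mul_comm]⟩)⟩
    · rw [Fin.prod_univ_succ]
      simp only [Fin.cons_zero, Fin.cons_succ, Fin.val_zero, Nat.sub_zero, Fin.val_succ,
        Nat.add_sub_add_right]
      rw [hge, hc, hde]
  · -- left inverse
    intro f _
    exact Fin.cons_self_tail f
  · -- right inverse
    intro q hq
    obtain ⟨⟨d, e⟩, c, g⟩ := q
    simp only [Finset.mem_sigma, Finset.mem_product, Finset.mem_filter, Finset.mem_Icc,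
      Fintype.mem_piFinset, Nat.mem_divisorsAntidiagonal] at hq
    obtain ⟨⟨hde, -⟩, ⟨⟨hc1, -⟩, hc⟩, hg, hge⟩ := hq
    refine Sigma.ext ?_ ?_
    · simp only [Fin.cons_zero, Fin.cons_succ, Fin.val_succ, Nat.add_sub_add_right, hc, hge]
    · simp
  · -- summand equality
    intro f _
    rw [Fin.sum_univ_succ, pow_add]
    rfl

lemma u_zero_apply (n : ℕ) : u 0 n = if n = 1 then 1 else 0 := by
  simp only [u]
  rcases eq_or_ne n 1 with rfl | hn
  · rw [if_pos rfl]
    rw [Finset.filter_true_of_mem (fun f _ => by simp)]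
    simp
  · rw [if_neg hn, Finset.filter_false_of_mem, Finset.sum_empty]
    intro f _
    simpa using fun h => hn h.symm

lemma LSeriesHasSum_u (r : ℕ) (s : ℂ) (hs : 1 < s.re) :
    LSeriesHasSum (fun n => (u r n : ℂ)) s
      (∏ m ∈ Finset.Icc 1 r, riemannZeta ((m : ℂ) * s) ^ 2 / riemannZeta (2 * (m : ℂ) * s)) := by
  induction r with
  | zero =>
    rw [show Finset.Icc 1 0 = (∅ : Finset ℕ) from rfl, Finset.prod_empty]
    have hδ : LSeriesHasSum δ s 1 := by
      unfold LSeriesHasSum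
      rw [funext (LSeries.term_delta s)]
      exact hasSum_ite_eq 1 1
    refine (LSeriesHasSum_congr s 1 (fun {n} hn => ?_)).mp hδ
    rw [u_zero_apply, delta]
    rcases eq_or_ne n 1 with rfl | h1
    · simp
    · simp [h1]
  | succ r ih =>
    have hre : 1 < (((r : ℂ) + 1) * s).re := by
      have h1 : (((r : ℂ) + 1) * s).re = ((r : ℝ) + 1) * s.re := by
        simp [Complex.mul_re]
      rw [h1]
      nlinarith [Nat.cast_nonneg (α := ℝ) r]
    have htwo := LSeriesHasSum_twoOmega hre
    have hpb : LSeriesHasSum (pb (r + 1) (fun n => (2 : ℂ) ^ n.primeFactors.card)) s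
        (riemannZeta (((r : ℂ) + 1) * s) ^ 2 / riemannZeta (2 * (((r : ℂ) + 1) * s))) := by
      refine LSeriesHasSum_pb (Nat.succ_ne_zero r) ?_
      rw [show (((r + 1 : ℕ)) : ℂ) = (r : ℂ) + 1 by push_cast; ring]
      exact htwo
    have hconv := hpb.convolution ih
    have hcongr : ∀ {n : ℕ}, n ≠ 0 →
        ((pb (r + 1) (fun n => (2 : ℂ) ^ n.primeFactors.card))
          ⍟ (fun n => (u r n : ℂ))) n = (u (r + 1) n : ℂ) := by
      intro n hn
      rw [LSeries.convolution_def, u_succ r n hn]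
      push_cast
      refine Finset.sum_congr rfl fun p _ => ?_
      rw [pb]
    have := (LSeriesHasSum_congr s _ hcongr).mp hconv
    rw [Finset.prod_Icc_succ_top (Nat.le_add_left 1 r)] at *
    rw [show (((r + 1 : ℕ)) : ℂ) = (r : ℂ) + 1 by push_cast; ring,
      show 2 * ((r : ℂ) + 1) * s = 2 * (((r : ℂ) + 1) * s) by ring]
    rw [mul_comm] at this
    exact this

theorem stmt19 (r : ℕ) (s : ℂ) (hs : 1 < s.re) :
    ∑' n : ℕ, (u r (n + 1) : ℂ) / (n + 1 : ℂ) ^ s =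
      ∏ m ∈ Finset.Icc 1 r, riemannZeta ((m : ℂ) * s) ^ 2 / riemannZeta (2 * (m : ℂ) * s) := by
  have h := LSeriesHasSum_u r s hs
  unfold LSeriesHasSum at h
  have hvanish : ∀ x ∉ Set.range Nat.succ, LSeries.term (fun n => (u r n : ℂ)) s x = 0 := by
    intro x hx
    have hx0 : x = 0 := by
      rcases x with _ | x
      · rfl
      · exact absurd ⟨x, rfl⟩ hx
    rw [hx0]
    exact LSeries.term_zero _ _
  have hshift : HasSum (fun n : ℕ => LSeries.term (fun n => (u r n : ℂ)) s (n + 1))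
      (∏ m ∈ Finset.Icc 1 r, riemannZeta ((m : ℂ) * s) ^ 2 / riemannZeta (2 * (m : ℂ) * s)) :=
    (Function.Injective.hasSum_iff (g := Nat.succ) Nat.succ_injective hvanish).mpr h
  have heq : (fun n : ℕ => (u r (n + 1) : ℂ) / (n + 1 : ℂ) ^ s)
      = fun n : ℕ => LSeries.term (fun n => (u r n : ℂ)) s (n + 1) := by
    funext n
    rw [LSeries.term_of_ne_zero (Nat.succ_ne_zero n), Nat.cast_succ]
  rw [heq]
  exact hshift.tsum_eq
end
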